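/- arXiv:1606.08567 — 3 statements merged into one kernel-verified Lean document; each statement's English description precedes it below -/
import Mathlib

section
/- Proposition 1 (variable-length memory of the binned chain). Assume τ ≥ D. Let m ≥ 1 and let x : {−m,…,−1} → A be a finite past such that there exists 1 ≤ ℓ ≤ m with x(−ℓ) = z and x(−j) ≠ z for all 1 ≤ j < ℓ. Then for every a ∈ A, P⁽ᵇ⁾(X₀ = a | X₋ₘ = x(−m),…,X₋₁ = x(−1)) = P⁽ᵇ⁾(X₀ = a | X₋ℓ = x(−ℓ),…,X₋₁ = x(−1)), where conditional probabilities of cylinder sets are the ratios of the corresponding cylinder probabilities (all finite cylinders of P⁽ᵇ⁾ have positive measure). -/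
open MeasureTheory Filter

/-- Alphabet of spike patterns of `N` neurons. -/
abbrev Pat (N : ℕ) : Type := Fin N → Bool

/-- Space of spike trains (configurations). -/
abbrev Conf (N : ℕ) : Type := ℤ → Pat N

/-- Conditional probability of cylinder sets, defined as the ratio of the
corresponding (cylinder) probabilities. -/
noncomputable def condProb {N : ℕ} (P : Measure (Conf N)) (E C : Set (Conf N)) : ℝ :=
  (P (E ∩ C)).toReal / (P C).toReal

/-- Cylinder set prescribing the configuration on the finite set `s`. -/
def cyl {N : ℕ} (s : Finset ℤ) (v : ℤ → Pat N) : Set (Conf N) :=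
  {ω | ∀ n ∈ s, ω n = v n}

/-- The left shift. -/
def shiftMap {N : ℕ} : Conf N → Conf N := fun ω n => ω (n + 1)

/-- The binning map with window size `τ`: `(binMap τ ω) m k = true` iff neuron `k`
spikes at least once in the window `{mτ, …, (m+1)τ - 1}`. -/
def binMap {N : ℕ} (τ : ℕ) (ω : Conf N) : Conf N :=
  fun m k => (List.range τ).any fun i => ω (m * (τ : ℤ) + (i : ℤ)) k

/-- The all-false pattern (no neuron spikes). -/
def zPat (N : ℕ) : Pat N := fun _ => false

/-- `P` is (stationary) Markov of order `D`: conditioning the present on any finite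
past of length `m ≥ D` equals conditioning on the last `D` coordinates. -/
def MarkovOrder {N : ℕ} (P : Measure (Conf N)) (D : ℕ) : Prop :=
  ∀ (a : Pat N) (m : ℕ), D ≤ m → ∀ w : ℤ → Pat N,
    condProb P {ω | ω 0 = a} (cyl (Finset.Icc (-(m : ℤ)) (-1)) w)
      = condProb P {ω | ω 0 = a} (cyl (Finset.Icc (-(D : ℤ)) (-1)) w)

/-- Every finite cylinder has strictly positive probability. -/
def PosCyl {N : ℕ} (P : Measure (Conf N)) : Prop :=
  ∀ (s : Finset ℤ) (v : ℤ → Pat N), 0 < P (cyl s v)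

/-!
A silent bin of the binned chain is a window of `τ ≥ D` consecutive silent time steps of the
underlying Markov chain of order `D`, and such a window screens off the past from the future:
`P (E ∩ F) * P W = P E * P F` whenever `E` depends only on times up to the end of the window
`W`, `F` only on times from its start, and both force the window to be silent. For the binned
cylinders this factors `P⁽ᵇ⁾ [-m, h]` as `P⁽ᵇ⁾ [-m, -ℓ] * P⁽ᵇ⁾ [-ℓ, h] / P W` for `h = 0` and
`h = -1`, so the factor `P⁽ᵇ⁾ [-m, -ℓ]` cancels from the conditional probability.
-/

open Finset

section Cylinders

variable {N : ℕ}

theorem cyl_eq_preimage_restrict (s : Finset ℤ) (v : ℤ → Pat N) :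
    cyl s v = s.restrict (π := fun _ => Pat N) ⁻¹' {s.restrict v} := by
  ext ω
  simp [cyl, funext_iff]

theorem measurableSet_cyl (s : Finset ℤ) (v : ℤ → Pat N) : MeasurableSet (cyl s v) := by
  rw [cyl_eq_preimage_restrict]
  exact s.measurable_restrict (measurableSet_singleton _)

theorem cyl_congr {s : Finset ℤ} {v w : ℤ → Pat N} (h : ∀ n ∈ s, v n = w n) :
    cyl s v = cyl s w := by
  ext ω
  exact forall₂_congr fun n hn => by rw [h n hn]

theorem cyl_union (s t : Finset ℤ) (v : ℤ → Pat N) :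
    cyl (s ∪ t) v = cyl s v ∩ cyl t v := by
  ext ω
  simp only [cyl, Set.mem_ofPred_eq, Set.mem_inter_iff, mem_union, or_imp, forall_and]

theorem cyl_inter_cyl_of_subset {s t : Finset ℤ} (hst : s ⊆ t) (v : ℤ → Pat N) :
    cyl t v ∩ cyl s v = cyl t v := by
  rw [← cyl_union, union_eq_left.mpr hst]

theorem cyl_inter_cyl_eq_empty {s t : Finset ℤ} {v w : ℤ → Pat N} {n : ℤ} (hs : n ∈ s)
    (ht : n ∈ t) (hvw : v n ≠ w n) : cyl s v ∩ cyl t w = ∅ :=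
  Set.eq_empty_of_forall_notMem fun _ hω => hvw ((hω.1 n hs).symm.trans (hω.2 n ht))

theorem setOf_apply_zero_inter_cyl {k : ℤ} (hk : k ≤ 0) (v : ℤ → Pat N) :
    {ω : Conf N | ω 0 = v 0} ∩ cyl (Icc k (-1)) v = cyl (Icc k 0) v := by
  have hIcc : Icc k 0 = {0} ∪ Icc k (-1) := by
    ext n; simp only [mem_union, mem_singleton, mem_Icc]; omega
  rw [hIcc, cyl_union]
  congr 1
  ext ω
  simp [cyl]

theorem measurable_of_dependsOn {β : Type*} [MeasurableSpace β] [Nonempty β] {I : Finset ℤ}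
    {f : Conf N → β} (hf : DependsOn f (I : Set ℤ)) : Measurable f := by
  obtain ⟨g, rfl⟩ := dependsOn_iff_exists_comp.mp hf
  exact (measurable_of_countable g).comp (Set.measurable_restrict _)

theorem measurableSet_of_dependsOn {I : Finset ℤ} {E : Set (Conf N)}
    (hE : DependsOn (· ∈ E) (I : Set ℤ)) : MeasurableSet E :=
  measurableSet_setOfPred.mpr (measurable_of_dependsOn hE)

theorem cyl_subset_of_dependsOn {I : Finset ℤ} {E : Set (Conf N)}
    (hE : DependsOn (· ∈ E) (I : Set ℤ)) {ω : Conf N} (hω : ω ∈ E) : cyl I ω ⊆ E :=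
  fun _ hω' => (hE fun n hn => hω' n hn).mpr hω

theorem measure_pos_of_dependsOn {P : Measure (Conf N)} (hpos : PosCyl P) {I : Finset ℤ}
    {E : Set (Conf N)} (hE : DependsOn (· ∈ E) (I : Set ℤ)) (hne : E.Nonempty) : 0 < P E :=
  (hpos I hne.some).trans_le (measure_mono (cyl_subset_of_dependsOn hE hne.some_mem))

/-- Both measures push forward to the same measure on the finite set of configurations on `I`. -/
theorem measure_eq_of_forall_cyl {μ ν : Measure (Conf N)} {I : Finset ℤ}
    (h : ∀ v, μ (cyl I v) = ν (cyl I v)) {E : Set (Conf N)}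
    (hE : DependsOn (· ∈ E) (I : Set ℤ)) : μ E = ν E := by
  have hmap : μ.map I.restrict = ν.map I.restrict := by
    refine Measure.ext_of_singleton fun u => ?_
    obtain ⟨v, rfl⟩ : ∃ v : Conf N, I.restrict v = u :=
      ⟨fun n => if hn : n ∈ I then u ⟨n, hn⟩ else zPat N, funext fun n => dif_pos n.2⟩
    simp only [Measure.map_apply (I.measurable_restrict) (measurableSet_singleton _),
      ← cyl_eq_preimage_restrict, h]
  have hE' : E = I.restrict ⁻¹' (I.restrict '' E) := by
    refine (Set.subset_preimage_image _ _).antisymm ?_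
    rintro ω ⟨ω', hω', hrestrict⟩
    exact cyl_subset_of_dependsOn hE hω' fun n hn => (congrFun hrestrict ⟨n, hn⟩).symm
  have hS : MeasurableSet (I.restrict '' E) := (Set.to_countable _).measurableSet
  rw [hE', ← Measure.map_apply I.measurable_restrict hS, hmap,
    Measure.map_apply I.measurable_restrict hS]

theorem condProb_eq_condProb_iff {P : Measure (Conf N)} [IsFiniteMeasure P]
    {E C E' C' : Set (Conf N)} (hC : P C ≠ 0) (hC' : P C' ≠ 0) :
    condProb P E C = condProb P E' C' ↔ P (E ∩ C) * P C' = P (E' ∩ C') * P C := by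
  rw [condProb, condProb, div_eq_div_iff (ENNReal.toReal_ne_zero.mpr ⟨hC, measure_ne_top P C⟩)
    (ENNReal.toReal_ne_zero.mpr ⟨hC', measure_ne_top P C'⟩), ← ENNReal.toReal_mul,
    ← ENNReal.toReal_mul, ENNReal.toReal_eq_toReal_iff' (by finiteness) (by finiteness)]

end Cylinders

section Stationarity

variable {N : ℕ} {P : Measure (Conf N)}

theorem measurable_shiftMap : Measurable (shiftMap (N := N)) :=
  measurable_pi_lambda _ fun n => measurable_pi_apply (n + 1)

theorem measure_cyl_Icc_add_one (hshift : Measure.map shiftMap P = P) (a b : ℤ)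
    (w : ℤ → Pat N) :
    P (cyl (Icc (a + 1) (b + 1)) w) = P (cyl (Icc a b) fun n => w (n + 1)) := by
  conv_rhs => rw [← hshift, Measure.map_apply measurable_shiftMap (measurableSet_cyl _ _)]
  congr 1
  ext ω
  simp only [cyl, Set.mem_preimage, Set.mem_ofPred_eq, shiftMap, mem_Icc]
  constructor
  · exact fun h n hn => h (n + 1) (by omega)
  · intro h n hn
    simpa using h (n - 1) (by omega)

theorem measure_cyl_Icc_add (hshift : Measure.map shiftMap P = P) (c : ℤ) :
    ∀ (a b : ℤ) (w : ℤ → Pat N),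
      P (cyl (Icc (a + c) (b + c)) w) = P (cyl (Icc a b) fun n => w (n + c)) := by
  induction c using Int.induction_on with
  | zero => simp
  | succ i ih =>
    intro a b w
    rw [← add_assoc, ← add_assoc, measure_cyl_Icc_add_one hshift, ih]
    congr 2
    ext n
    congr 1
    ring
  | pred i ih =>
    intro a b w
    have h := measure_cyl_Icc_add_one hshift (a + (-i - 1)) (b + (-i - 1)) fun n => w (n - 1)
    simp only [add_sub_cancel_right] at h
    rw [← h, show a + (-i - 1) + 1 = a + -i by ring, show b + (-i - 1) + 1 = b + -i by ring, ih]
    congr 2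
    ext n
    congr 1
    ring

end Stationarity

section Markov

variable {N D : ℕ} {P : Measure (Conf N)} [IsFiniteMeasure P]

theorem measure_cyl_Icc_succ_mul (hshift : Measure.map shiftMap P = P) (hpos : PosCyl P)
    (hMarkov : MarkovOrder P D) (w : ℤ → Pat N) {s t : ℤ} (hst : D ≤ t + 1 - s) :
    P (cyl (Icc s (t + 1)) w) * P (cyl (Icc (t + 1 - D) t) w)
      = P (cyl (Icc (t + 1 - D) (t + 1)) w) * P (cyl (Icc s t) w) := by
  set w' : ℤ → Pat N := fun n => w (n + (t + 1))
  have hshift' : ∀ a b : ℤ,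
      P (cyl (Icc a b) w) = P (cyl (Icc (a - (t + 1)) (b - (t + 1))) w') := fun a b => by
    simpa using measure_cyl_Icc_add hshift (t + 1) (a - (t + 1)) (b - (t + 1)) w
  have hM := hMarkov (w' 0) (t + 1 - s).toNat (by omega) w'
  rw [condProb_eq_condProb_iff (hpos _ _).ne' (hpos _ _).ne',
    setOf_apply_zero_inter_cyl (by omega), setOf_apply_zero_inter_cyl (by omega)] at hM
  simp only [hshift']
  convert hM using 5 <;> omega

theorem measure_cyl_Icc_mul_window (hshift : Measure.map shiftMap P = P) (hpos : PosCyl P)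
    (hMarkov : MarkovOrder P D) (w : ℤ → Pat N) {u p q r : ℤ} (hwin : D ≤ q + 1 - p)
    (hup : u ≤ p) (hqr : q ≤ r) :
    P (cyl (Icc u r) w) * P (cyl (Icc p q) w) = P (cyl (Icc u q) w) * P (cyl (Icc p r) w) := by
  induction r, hqr using Int.leInduction with
  | base => rfl
  | succ r hqr ih =>
    have hu := measure_cyl_Icc_succ_mul hshift hpos hMarkov w (s := u) (t := r) (by omega)
    have hp := measure_cyl_Icc_succ_mul hshift hpos hMarkov w (s := p) (t := r) (by omega)
    set K := P (cyl (Icc (r + 1 - D) r) w)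
    refine (ENNReal.mul_left_inj (hpos _ _).ne' (measure_ne_top P _)
      : _ * K = _ * K ↔ _).mp ?_
    calc P (cyl (Icc u (r + 1)) w) * P (cyl (Icc p q) w) * K
        = P (cyl (Icc u (r + 1)) w) * K * P (cyl (Icc p q) w) := mul_right_comm _ _ _
      _ = P (cyl (Icc u r) w) * P (cyl (Icc p q) w) * P (cyl (Icc (r + 1 - D) (r + 1)) w) := by
        rw [hu]; ring
      _ = P (cyl (Icc u q) w) * (P (cyl (Icc p r) w) * P (cyl (Icc (r + 1 - D) (r + 1)) w)) := by
        rw [ih]; ring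
      _ = P (cyl (Icc u q) w) * P (cyl (Icc p (r + 1)) w) * K := by
        rw [mul_comm (P (cyl (Icc p r) w)), ← hp]; ring

theorem measure_cyl_inter_mul_window (hshift : Measure.map shiftMap P = P) (hpos : PosCyl P)
    (hMarkov : MarkovOrder P D) (v : ℤ → Pat N) {u p q r : ℤ} (hwin : D ≤ q + 1 - p)
    (hup : u ≤ p) (hqr : q ≤ r) {F : Set (Conf N)}
    (hF : DependsOn (· ∈ F) (Icc p r : Set ℤ)) (hFW : F ⊆ cyl (Icc p q) v) :
    P (cyl (Icc u q) v ∩ F) * P (cyl (Icc p q) v) = P (cyl (Icc u q) v) * P F := by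
  have key := measure_eq_of_forall_cyl
    (μ := P (cyl (Icc p q) v) • P.restrict (cyl (Icc u q) v))
    (ν := P (cyl (Icc u q) v) • P.restrict (cyl (Icc p q) v)) ?_ hF
  · simpa [Measure.restrict_apply' (measurableSet_cyl _ _), Set.inter_eq_left.mpr hFW,
      Set.inter_comm, mul_comm] using key
  intro v'
  simp only [Measure.smul_apply, Measure.restrict_apply' (measurableSet_cyl _ _), smul_eq_mul]
  by_cases hagree : ∀ n ∈ Icc p q, v' n = v n
  · set w : ℤ → Pat N := fun n => if n ≤ q then v n else v' n
    have hv' : cyl (Icc p r) v' = cyl (Icc p r) w := cyl_congr fun n hn => by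
      simp only [mem_Icc] at hn
      by_cases hnq : n ≤ q
      · simp [w, hnq, hagree n (mem_Icc.mpr ⟨hn.1, hnq⟩)]
      · simp [w, hnq]
    have hv : ∀ a, cyl (Icc a q) v = cyl (Icc a q) w :=
      fun a => cyl_congr fun n hn => by simp [w, (mem_Icc.mp hn).2]
    have hIcc : Icc p r ∪ Icc u q = Icc u r := by ext n; simp only [mem_union, mem_Icc]; omega
    rw [hv', hv, hv, ← cyl_union, hIcc, cyl_inter_cyl_of_subset (Icc_subset_Icc le_rfl hqr),
      mul_comm, measure_cyl_Icc_mul_window hshift hpos hMarkov w hwin hup hqr]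
  · push Not at hagree
    obtain ⟨n, hn, hne⟩ := hagree
    have hnp : n ∈ Icc p r := Icc_subset_Icc le_rfl hqr hn
    have hnu : n ∈ Icc u q := Icc_subset_Icc hup le_rfl hn
    rw [cyl_inter_cyl_eq_empty hnp hnu hne, cyl_inter_cyl_eq_empty hnp hn hne]
    simp

theorem measure_inter_mul_window (hshift : Measure.map shiftMap P = P) (hpos : PosCyl P)
    (hMarkov : MarkovOrder P D) (b : ℤ → Pat N) {u p q r : ℤ} (hwin : D ≤ q + 1 - p)
    (hup : u ≤ p) (hqr : q ≤ r) {E F : Set (Conf N)}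
    (hE : DependsOn (· ∈ E) (Icc u q : Set ℤ)) (hF : DependsOn (· ∈ F) (Icc p r : Set ℤ))
    (hEW : E ⊆ cyl (Icc p q) b) (hFW : F ⊆ cyl (Icc p q) b) :
    P (E ∩ F) * P (cyl (Icc p q) b) = P E * P F := by
  have key := measure_eq_of_forall_cyl
    (μ := P (cyl (Icc p q) b) • P.restrict F)
    (ν := P F • P.restrict (cyl (Icc p q) b)) ?_ hE
  · simpa [Measure.restrict_apply' (measurableSet_cyl _ _), Set.inter_eq_left.mpr hEW,
      Measure.restrict_apply (measurableSet_of_dependsOn hE), Set.inter_comm, mul_comm] using key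
  intro v
  simp only [Measure.smul_apply, Measure.restrict_apply' (measurableSet_cyl _ _),
    Measure.restrict_apply' (measurableSet_of_dependsOn hF), smul_eq_mul]
  by_cases hagree : ∀ n ∈ Icc p q, v n = b n
  · rw [cyl_congr fun n hn => (hagree n hn).symm] at hFW ⊢
    rw [cyl_inter_cyl_of_subset (Icc_subset_Icc hup le_rfl), mul_comm,
      measure_cyl_inter_mul_window hshift hpos hMarkov v hwin hup hqr hF hFW, mul_comm]
  · push Not at hagree
    obtain ⟨n, hn, hne⟩ := hagree
    have hempty := cyl_inter_cyl_eq_empty (Icc_subset_Icc hup le_rfl hn) hn hne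
    rw [hempty, Set.subset_eq_empty (Set.inter_subset_inter_right _ hFW) hempty]
    simp

end Markov

section Binning

variable {N D τ : ℕ}

theorem dependsOn_binMap_apply (τ : ℕ) (m : ℤ) :
    DependsOn (fun ω : Conf N => binMap τ ω m) (Icc (m * τ) (m * τ + τ - 1) : Set ℤ) := by
  intro ω ω' h
  funext k
  rw [Bool.eq_iff_iff]
  simp only [binMap, List.any_eq_true, List.mem_range]
  refine exists_congr fun i => and_congr_right fun hi => ?_
  rw [h _ (by simp only [coe_Icc, Set.mem_Icc]; omega)]

theorem measurable_binMap (τ : ℕ) : Measurable (binMap (N := N) τ) :=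
  measurable_pi_lambda _ fun m => measurable_of_dependsOn (dependsOn_binMap_apply τ m)

theorem dependsOn_binMap_preimage_cyl (τ : ℕ) (lo hi : ℤ) (y : ℤ → Pat N) :
    DependsOn (· ∈ binMap τ ⁻¹' cyl (Icc lo hi) y)
      (Icc (lo * τ) (hi * τ + τ - 1) : Set ℤ) := by
  intro ω ω' h
  refine propext (forall₂_congr fun n hn => ?_)
  suffices binMap τ ω n = binMap τ ω' n by rw [this]
  refine dependsOn_binMap_apply τ n fun k hk => h k ?_
  simp only [mem_Icc, coe_Icc, Set.mem_Icc] at hn hk ⊢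
  have := mul_le_mul_of_nonneg_right hn.1 (Nat.cast_nonneg τ : (0 : ℤ) ≤ τ)
  have := mul_le_mul_of_nonneg_right hn.2 (Nat.cast_nonneg τ : (0 : ℤ) ≤ τ)
  omega

theorem binMap_comp_ediv (hτ : 0 < τ) (y : ℤ → Pat N) :
    binMap τ (fun n => y (n / τ)) = y := by
  funext m k
  rw [Bool.eq_iff_iff]
  have hdiv : ∀ i < τ, (m * τ + i) / (τ : ℤ) = m := fun i hi => by
    rw [add_comm, Int.add_mul_ediv_right _ _ (by omega), Int.ediv_eq_zero_of_lt (by omega)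
      (by omega), zero_add]
  simp only [binMap, List.any_eq_true, List.mem_range]
  constructor
  · rintro ⟨i, hi, h⟩
    rwa [hdiv i hi] at h
  · exact fun h => ⟨0, hτ, by rwa [hdiv 0 hτ]⟩

theorem mem_cyl_window_of_binMap_eq_zPat {ω : Conf N} {m : ℤ} (h : binMap τ ω m = zPat N) :
    ω ∈ cyl (Icc (m * τ) (m * τ + τ - 1)) fun _ => zPat N := by
  intro n hn
  funext k
  have hk := congrFun h k
  simp only [binMap, zPat, List.any_eq_false, List.mem_range] at hk ⊢
  simp only [mem_Icc] at hn
  simpa [Int.toNat_of_nonneg (by omega : 0 ≤ n - m * τ)] using hk (n - m * τ).toNat (by omega)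

theorem map_binMap_cyl_pos {P : Measure (Conf N)} (hτ : 0 < τ) (hpos : PosCyl P) (lo hi : ℤ)
    (y : ℤ → Pat N) : 0 < P.map (binMap τ) (cyl (Icc lo hi) y) := by
  rw [Measure.map_apply (measurable_binMap τ) (measurableSet_cyl _ _)]
  exact measure_pos_of_dependsOn hpos (dependsOn_binMap_preimage_cyl τ lo hi y)
    ⟨fun n => y (n / τ), fun n _ => by rw [binMap_comp_ediv hτ]⟩

theorem map_binMap_cyl_mul {P : Measure (Conf N)} [IsFiniteMeasure P]
    (hshift : Measure.map shiftMap P = P) (hpos : PosCyl P) (hMarkov : MarkovOrder P D)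
    (hτD : D ≤ τ) {lo c hi : ℤ} (hlo : lo ≤ c) (hhi : c ≤ hi) {y : ℤ → Pat N}
    (hy : y c = zPat N) :
    P.map (binMap τ) (cyl (Icc lo hi) y) * P (cyl (Icc (c * τ) (c * τ + τ - 1)) fun _ => zPat N)
      = P.map (binMap τ) (cyl (Icc lo c) y) * P.map (binMap τ) (cyl (Icc c hi) y) := by
  have hτ : (0 : ℤ) ≤ τ := Nat.cast_nonneg τ
  have hsilent : ∀ a b, c ∈ Icc a b →
      binMap τ ⁻¹' cyl (Icc a b) y ⊆ cyl (Icc (c * τ) (c * τ + τ - 1)) fun _ => zPat N :=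
    fun a b hc ω hω => mem_cyl_window_of_binMap_eq_zPat ((hω c hc).trans hy)
  have hIcc : Icc lo hi = Icc lo c ∪ Icc c hi := by
    ext n; simp only [mem_union, mem_Icc]; omega
  have hhiτ := mul_le_mul_of_nonneg_right hhi hτ
  simp only [Measure.map_apply (measurable_binMap τ) (measurableSet_cyl _ _)]
  rw [hIcc, cyl_union, Set.preimage_inter]
  exact measure_inter_mul_window hshift hpos hMarkov _ (by omega)
    (mul_le_mul_of_nonneg_right hlo hτ) (by omega) (dependsOn_binMap_preimage_cyl τ lo c y)
    (dependsOn_binMap_preimage_cyl τ c hi y) (hsilent _ _ (by simp [hlo]))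
    (hsilent _ _ (by simp [hhi]))

end Binning

theorem binned_chain_variable_length_memory_general
    {N D τ : ℕ} (hD : 1 ≤ D) (hτD : D ≤ τ)
    (P : Measure (Conf N)) [IsProbabilityMeasure P]
    (hshift : Measure.map shiftMap P = P)
    (hpos : PosCyl P) (hMarkov : MarkovOrder P D)
    (m : ℕ) (x : ℤ → Pat N) (ℓ : ℕ)
    (hℓ1 : 1 ≤ ℓ) (hℓm : ℓ ≤ m)
    (hz : x (-(ℓ : ℤ)) = zPat N)
    (a : Pat N) :
    condProb (Measure.map (binMap τ) P) {ω | ω 0 = a}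
        (cyl (Finset.Icc (-(m : ℤ)) (-1)) x)
      = condProb (Measure.map (binMap τ) P) {ω | ω 0 = a}
        (cyl (Finset.Icc (-(ℓ : ℤ)) (-1)) x) := by
  set Q := Measure.map (binMap τ) P
  set x' := Function.update x 0 a
  have hpast : ∀ k : ℤ, cyl (Icc k (-1)) x = cyl (Icc k (-1)) x' :=
    fun k => cyl_congr fun n hn => by
      simp only [mem_Icc] at hn
      simp [x', show n ≠ 0 by omega]
  have hpresent : ∀ k : ℤ, k ≤ 0 →
      {ω : Conf N | ω 0 = a} ∩ cyl (Icc k (-1)) x' = cyl (Icc k 0) x' :=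
    fun k hk => by simpa [x'] using setOf_apply_zero_inter_cyl hk x'
  have hz' : x' (-ℓ) = zPat N := by
    simp only [x', Function.update_apply, if_neg (show -(ℓ : ℤ) ≠ 0 by omega)]
    exact hz
  set Z := P (cyl (Icc (-ℓ * τ) (-ℓ * τ + τ - 1)) fun _ => zPat N)
  have hbin : ∀ hi : ℤ, -(ℓ : ℤ) ≤ hi →
      Q (cyl (Icc (-m) hi) x') * Z = Q (cyl (Icc (-m) (-ℓ)) x') * Q (cyl (Icc (-ℓ) hi) x') :=
    fun hi hhi => map_binMap_cyl_mul hshift hpos hMarkov hτD (by omega) hhi hz'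
  rw [hpast, hpast, condProb_eq_condProb_iff (map_binMap_cyl_pos (by omega) hpos _ _ _).ne'
    (map_binMap_cyl_pos (by omega) hpos _ _ _).ne', hpresent _ (by omega), hpresent _ (by omega)]
  refine (ENNReal.mul_left_inj (hpos _ _).ne' (measure_ne_top P _) : _ * Z = _ * Z ↔ _).mp ?_
  calc Q (cyl (Icc (-m) 0) x') * Q (cyl (Icc (-ℓ) (-1)) x') * Z
      = Q (cyl (Icc (-m) (-ℓ)) x') * Q (cyl (Icc (-ℓ) 0) x') * Q (cyl (Icc (-ℓ) (-1)) x') := by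
        rw [mul_right_comm, hbin 0 (by omega)]
    _ = Q (cyl (Icc (-ℓ) 0) x') * Q (cyl (Icc (-m) (-1)) x') * Z := by
        rw [mul_assoc _ _ Z, hbin (-1) (by omega)]
        ring

/-- **Proposition 1** (variable-length memory of the binned chain).
If `τ ≥ D` and the finite past `x` on `{-m, …, -1}` has its first occurrence of the
empty pattern `z` (going back from `-1`) exactly at position `-ℓ`, then conditioning
the binned chain on the whole past `{-m, …, -1}` equals conditioning on `{-ℓ, …, -1}`. -/
theorem binned_chain_variable_length_memory
    {N D τ : ℕ} (hN : 1 ≤ N) (hD : 1 ≤ D) (hτD : D ≤ τ)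
    (P : Measure (Conf N)) [IsProbabilityMeasure P]
    (hshift : Measure.map shiftMap P = P)
    (hpos : PosCyl P) (hMarkov : MarkovOrder P D)
    (m : ℕ) (hm : 1 ≤ m) (x : ℤ → Pat N) (ℓ : ℕ)
    (hℓ1 : 1 ≤ ℓ) (hℓm : ℓ ≤ m)
    (hz : x (-(ℓ : ℤ)) = zPat N)
    (hnz : ∀ j : ℕ, 1 ≤ j → j < ℓ → x (-(j : ℤ)) ≠ zPat N)
    (a : Pat N) :
    condProb (Measure.map (binMap τ) P) {ω | ω 0 = a}
        (cyl (Finset.Icc (-(m : ℤ)) (-1)) x)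
      = condProb (Measure.map (binMap τ) P) {ω | ω 0 = a}
        (cyl (Finset.Icc (-(ℓ : ℤ)) (-1)) x) :=
  binned_chain_variable_length_memory_general hD hτD P hshift hpos hMarkov m x ℓ hℓ1 hℓm hz a
end

section
/- Proposition 2 (exponential continuity rate of the binned transition kernel, finite-past form). There exist constants C > 0 and α > 0 (depending on N, D, τ and P) such that for every k ≥ 1, every m, m' ≥ k, every a ∈ A, and all finite pasts x : {−m,…,−1} → A and y : {−m',…,−1} → A satisfying x(−j) = y(−j) for all 1 ≤ j ≤ k, one has |P⁽ᵇ⁾(X₀ = a | X₋ₘ = x(−m),…,X₋₁ = x(−1)) − P⁽ᵇ⁾(X₀ = a | X₋ₘ' = y(−m'),…,X₋₁ = y(−1))| ≤ C·e^{−αk}. -/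
open MeasureTheory Filter

/-!
The binned process is a hidden Markov chain: given the last `D` unbinned symbols `z` before a
binned word `t`, what follows `t` is independent of the earlier past. Hence the binned probability
of seeing `a` after any past ending in `t` is a mixture, over the finitely many hidden states `z`,
of the kernels `binnedKernel P τ a z t`, so it lies between their minimum and maximum. Reading `D`
further binned symbols (at least `D` unbinned steps) refreshes the hidden state; since all
cylinders have positive probability, the mixing weights belonging to two hidden states are
comparable up to a factor `ε ^ 2`. So the oscillation `max - min` contracts by `1 - ε ^ 2` with
every `D` binned symbols (a Doeblin argument), and after `k` symbols it is at most
`(1 - ε ^ 2) ^ (k / D)`.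
-/

namespace List

lemma exists_ofFn_eq {α : Type*} {l : List α} {n : ℕ} (h : l.length = n) :
    ∃ v : Fin n → α, ofFn v = l := by
  subst h
  exact ⟨l.get, ofFn_get l⟩

lemma rtake_append_of_le_length {α : Type*} {l₁ l₂ : List α} {n : ℕ}
    (h : n ≤ l₂.length) : (l₁ ++ l₂).rtake n = l₂.rtake n := by
  simp only [rtake_eq_reverse_take_reverse, reverse_append,
    take_append_of_le_length (l₂.length_reverse ▸ h)]

lemma rtake_append_rtake {α : Type*} (l v : List α) (n : ℕ) :
    (l.rtake n ++ v).rtake n = (l ++ v).rtake n := by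
  simp only [rtake_eq_reverse_take_reverse, reverse_append, take_append, reverse_reverse,
    take_take, length_reverse]
  congr 3
  omega

lemma length_rtake_of_le {α : Type*} {l : List α} {n : ℕ} (h : n ≤ l.length) :
    (l.rtake n).length = n := by
  simp only [rtake, length_drop]
  omega

lemma any_range_congr {n : ℕ} {f g : ℕ → Bool} (h : ∀ r < n, f r = g r) :
    (range n).any f = (range n).any g := by
  refine Bool.eq_iff_iff.mpr ?_
  simp only [any_eq_true, mem_range]
  exact exists_congr fun r => and_congr_right fun hr => by rw [h r hr]

end List

lemma sum_ofFn_append {α M : Type*} [Fintype α] [AddCommMonoid M] {m n k : ℕ} (h : m + n = k)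
    (f : List α → M) :
    ∑ v : Fin k → α, f (List.ofFn v)
      = ∑ u₁ : Fin m → α, ∑ u₂ : Fin n → α, f (List.ofFn u₁ ++ List.ofFn u₂) := by
  subst h
  rw [← (Fin.appendEquiv m n).sum_comp, Fintype.sum_prod_type]
  simp [Fin.appendEquiv, List.ofFn_fin_append]

lemma Finset.sup'_sub_inf'_le {ι α : Type*} [LinearOrder α] [Sub α] {s : Finset ι}
    (H : s.Nonempty) {f : ι → α} {c : α} (h : ∀ i ∈ s, ∀ j ∈ s, f i - f j ≤ c) :
    s.sup' H f - s.inf' H f ≤ c := by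
  obtain ⟨i, hi, hsup⟩ := s.exists_mem_eq_sup' H f
  obtain ⟨j, hj, hinf⟩ := s.exists_mem_eq_inf' H f
  rw [hsup, hinf]
  exact h i hi j hj

lemma sum_mul_sub_sum_mul_le {ι : Type*} [Fintype ι] {p q h : ι → ℝ} {δ lo hi : ℝ}
    (hq : ∀ i, 0 ≤ q i) (hp1 : ∑ i, p i = 1) (hq1 : ∑ i, q i = 1)
    (hpq : ∀ i, δ * q i ≤ p i) (hh : ∀ i, h i ∈ Set.Icc lo hi) :
    ∑ i, p i * h i - ∑ i, q i * h i ≤ (1 - δ) * (hi - lo) := by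
  have hδ : δ ≤ 1 := by
    simpa [← Finset.mul_sum, hp1, hq1] using
      Finset.sum_le_sum fun i (_ : i ∈ Finset.univ) => hpq i
  have hexcess : ∑ i, (p i - δ * q i) * h i ≤ (1 - δ) * hi := calc
    _ ≤ ∑ i, (p i - δ * q i) * hi :=
      Finset.sum_le_sum fun i _ => mul_le_mul_of_nonneg_left (hh i).2 (sub_nonneg.2 (hpq i))
    _ = (1 - δ) * hi := by
      rw [← Finset.sum_mul, Finset.sum_sub_distrib, ← Finset.mul_sum, hp1, hq1, mul_one]
  have hlo : lo ≤ ∑ i, q i * h i := calc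
    lo = ∑ i, q i * lo := by rw [← Finset.sum_mul, hq1, one_mul]
    _ ≤ ∑ i, q i * h i := Finset.sum_le_sum fun i _ => mul_le_mul_of_nonneg_left (hh i).1 (hq i)
  have hsplit : ∑ i, p i * h i - ∑ i, q i * h i
      = ∑ i, (p i - δ * q i) * h i - (1 - δ) * ∑ i, q i * h i := by
    simp only [sub_mul, Finset.sum_sub_distrib, Finset.mul_sum, one_mul, mul_assoc]
    ring
  rw [hsplit]
  nlinarith

lemma div_sum_sub_div_sum_le {ι : Type*} [Fintype ι] {p q h : ι → ℝ} {ε lo hi : ℝ}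
    (hε : 0 ≤ ε) (hq : ∀ i, 0 ≤ q i) (hpq : ∀ i, ε * q i ≤ p i) (hqp : ∀ i, ε * p i ≤ q i)
    (hP : 0 < ∑ i, p i) (hQ : 0 < ∑ i, q i) (hh : ∀ i, h i ∈ Set.Icc lo hi) :
    (∑ i, p i * h i) / ∑ i, p i - (∑ i, q i * h i) / ∑ i, q i
      ≤ (1 - ε ^ 2) * (hi - lo) := by
  have hPQ : ε * ∑ i, p i ≤ ∑ i, q i := by
    rw [Finset.mul_sum]
    exact Finset.sum_le_sum fun i _ => hqp i
  have hnorm : ∀ i, ε ^ 2 * (q i / ∑ j, q j) ≤ p i / ∑ j, p j := fun i => by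
    rw [← mul_div_assoc, div_le_div_iff₀ hQ hP]
    have hp : 0 ≤ p i := (mul_nonneg hε (hq i)).trans (hpq i)
    nlinarith [mul_le_mul (hpq i) hPQ (mul_nonneg hε hP.le) hp]
  have := sum_mul_sub_sum_mul_le (fun i => div_nonneg (hq i) hQ.le)
    (by rw [← Finset.sum_div, div_self hP.ne']) (by rw [← Finset.sum_div, div_self hQ.ne'])
    hnorm hh
  simpa only [div_mul_eq_mul_div, ← Finset.sum_div] using this

lemma pow_div_le_inv_mul_exp {β : ℝ} (hβ0 : 0 < β) (hβ1 : β ≤ 1) (k D : ℕ) :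
    β ^ (k / D) ≤ β⁻¹ * Real.exp (-(-Real.log β / D) * k) := by
  have hfloor : (k : ℝ) / D - 1 ≤ (k / D : ℕ) := by
    rw [← Nat.floor_div_eq_div (K := ℝ)]
    exact (Nat.sub_one_lt_floor _).le
  calc β ^ (k / D) = β ^ ((k / D : ℕ) : ℝ) := (Real.rpow_natCast β _).symm
    _ ≤ β ^ ((k : ℝ) / D - 1) := Real.rpow_le_rpow_of_exponent_ge hβ0 hβ1 hfloor
    _ = β⁻¹ * Real.exp (-(-Real.log β / D) * k) := by
      rw [Real.rpow_sub_one hβ0.ne', Real.rpow_def_of_pos hβ0, div_eq_inv_mul]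
      congr 2
      ring

namespace BinnedKernel

variable {N : ℕ}

def wordAt (ω : Conf N) (n : ℤ) (L : ℕ) : List (Pat N) :=
  List.ofFn fun j : Fin L => ω (n + j)

def wordCyl (n : ℤ) (l : List (Pat N)) : Set (Conf N) :=
  {ω | wordAt ω n l.length = l}

@[simp]
lemma length_wordAt (ω : Conf N) (n : ℤ) (L : ℕ) : (wordAt ω n L).length = L :=
  List.length_ofFn

lemma wordAt_add (ω : Conf N) (n : ℤ) (L₁ L₂ : ℕ) :
    wordAt ω n (L₁ + L₂) = wordAt ω n L₁ ++ wordAt ω (n + L₁) L₂ := by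
  simp only [wordAt, List.ofFn_add, Fin.val_castLE, Fin.val_natAdd, Nat.cast_add, add_assoc]

lemma wordCyl_append (n : ℤ) (l₁ l₂ : List (Pat N)) :
    wordCyl n (l₁ ++ l₂) = wordCyl n l₁ ∩ wordCyl (n + l₁.length) l₂ := by
  ext ω
  simp only [wordCyl, Set.mem_ofPred_eq, Set.mem_inter_iff, List.length_append, wordAt_add]
  exact ⟨fun h => List.append_inj h (length_wordAt ..), fun h => by rw [h.1, h.2]⟩

@[simp]
lemma wordCyl_nil (n : ℤ) : wordCyl n ([] : List (Pat N)) = Set.univ := by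
  ext ω
  simp [wordCyl, wordAt]

lemma wordCyl_singleton (a : Pat N) : wordCyl 0 [a] = {ω | ω 0 = a} := by
  ext ω
  simp [wordCyl, wordAt]

lemma mem_wordCyl_ofFn {n : ℤ} {L : ℕ} {v : Fin L → Pat N} {ω : Conf N} :
    ω ∈ wordCyl n (List.ofFn v) ↔ (fun j : Fin L => ω (n + j)) = v := by
  change wordAt ω n (List.ofFn v).length = _ ↔ _
  rw [List.length_ofFn, wordAt, List.ofFn_inj]

lemma measurableSet_wordCyl (n : ℤ) (l : List (Pat N)) : MeasurableSet (wordCyl n l) :=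
  show MeasurableSet
    ((fun (ω : Conf N) (j : Fin l.length) => ω (n + j)) ⁻¹' {v | List.ofFn v = l}) from
  (measurable_pi_lambda _ fun j : Fin l.length => measurable_pi_apply (n + j))
    (Set.toFinite {v : Fin l.length → Pat N | List.ofFn v = l}).measurableSet

lemma measure_inter_biUnion_wordCyl (μ : Measure (Conf N)) {S : Set (Conf N)}
    (hS : MeasurableSet S) (n : ℤ) {L : ℕ} (F : Finset (Fin L → Pat N)) :
    μ (S ∩ ⋃ v ∈ F, wordCyl n (List.ofFn v))
      = ∑ v ∈ F, μ (S ∩ wordCyl n (List.ofFn v)) := by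
  rw [Set.inter_iUnion₂, measure_biUnion_finset]
  · intro v _ v' _ hne
    refine Set.disjoint_left.mpr fun ω h h' => hne ?_
    exact (mem_wordCyl_ofFn.mp h.2).symm.trans (mem_wordCyl_ofFn.mp h'.2)
  · exact fun v _ => hS.inter (measurableSet_wordCyl _ _)

lemma measure_eq_sum_inter_wordCyl (μ : Measure (Conf N)) {S : Set (Conf N)}
    (hS : MeasurableSet S) (n : ℤ) (L : ℕ) :
    μ S = ∑ v : Fin L → Pat N, μ (S ∩ wordCyl n (List.ofFn v)) := by
  rw [← measure_inter_biUnion_wordCyl μ hS n]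
  congr 1
  refine (Set.inter_eq_left.mpr ?_).symm
  exact fun ω _ => Set.mem_biUnion (Finset.mem_univ _) (mem_wordCyl_ofFn.mpr rfl)

lemma measurable_shiftMap : Measurable (shiftMap (N := N)) :=
  measurable_pi_lambda _ fun n => measurable_pi_apply (n + 1)

lemma preimage_shiftMap_wordCyl (n : ℤ) (l : List (Pat N)) :
    shiftMap ⁻¹' wordCyl n l = wordCyl (n + 1) l := by
  ext ω
  simp only [Set.mem_preimage, wordCyl, Set.mem_ofPred_eq, wordAt, shiftMap, add_right_comm]

lemma measure_wordCyl_eq {μ : Measure (Conf N)} (hshift : Measure.map shiftMap μ = μ)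
    (n : ℤ) (l : List (Pat N)) : μ (wordCyl n l) = μ (wordCyl 0 l) := by
  have step (n : ℤ) : μ (wordCyl (n + 1) l) = μ (wordCyl n l) := by
    conv_rhs => rw [← hshift]
    rw [Measure.map_apply measurable_shiftMap (measurableSet_wordCyl n l),
      preimage_shiftMap_wordCyl]
  induction n using Int.induction_on with
  | zero => rfl
  | succ i ih => rw [step, ih]
  | pred i ih => rw [← ih, ← step, sub_add_cancel]

lemma cyl_Icc_eq_wordCyl (m : ℕ) (x : Conf N) :
    cyl (Finset.Icc (-(m : ℤ)) (-1)) x = wordCyl (-m) (wordAt x (-m) m) := by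
  ext ω
  simp only [cyl, wordCyl, Set.mem_ofPred_eq, length_wordAt, Finset.mem_Icc]
  rw [wordAt, wordAt, List.ofFn_inj, funext_iff]
  refine ⟨fun h j => h _ ⟨by omega, by omega⟩, fun h n hn => ?_⟩
  have := h ⟨(n + m).toNat, by omega⟩
  rwa [show -(m : ℤ) + (n + m).toNat = n by omega] at this

lemma exists_wordAt_eq (n : ℤ) (l : List (Pat N)) : ∃ x : Conf N, wordAt x n l.length = l :=
  ⟨fun i => l.getD (i - n).toNat (zPat N), List.ext_getElem (by simp) fun j _ _ => by
    simp [wordAt]⟩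

lemma wordAt_rtake {x : Conf N} {k m : ℕ} (hkm : k ≤ m) :
    (wordAt x (-m) m).rtake k = wordAt x (-k) k := by
  obtain ⟨j, rfl⟩ := Nat.exists_eq_add_of_le' hkm
  rw [wordAt_add, List.rtake_append_of_le_length (by simp), show -((j + k : ℕ) : ℤ) + j = -k by
    push_cast; ring]
  simp [List.rtake]

lemma condProb_cyl_Icc (μ : Measure (Conf N)) (a : Pat N) (m : ℕ) (x : Conf N) :
    condProb μ {ω | ω 0 = a} (cyl (Finset.Icc (-(m : ℤ)) (-1)) x)
      = (μ (wordCyl (-m) (wordAt x (-m) m ++ [a]))).toReal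
          / (μ (wordCyl (-m) (wordAt x (-m) m))).toReal := by
  rw [condProb, cyl_Icc_eq_wordCyl, wordCyl_append, length_wordAt, neg_add_cancel,
    wordCyl_singleton, Set.inter_comm]

noncomputable def wordProb (P : Measure (Conf N)) (l : List (Pat N)) : ℝ :=
  (P (wordCyl 0 l)).toReal

lemma wordProb_nonneg (P : Measure (Conf N)) (l : List (Pat N)) : 0 ≤ wordProb P l :=
  ENNReal.toReal_nonneg

lemma wordProb_le_one (P : Measure (Conf N)) [IsProbabilityMeasure P] (l : List (Pat N)) :
    wordProb P l ≤ 1 :=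
  ENNReal.toReal_le_of_le_ofReal zero_le_one (by simpa using prob_le_one)

lemma wordProb_pos {P : Measure (Conf N)} [IsFiniteMeasure P]
    (hshift : Measure.map shiftMap P = P) (hpos : PosCyl P) (l : List (Pat N)) :
    0 < wordProb P l := by
  obtain ⟨x, hx⟩ := exists_wordAt_eq (-(l.length : ℤ)) l
  have h := hpos (Finset.Icc (-(l.length : ℤ)) (-1)) x
  rw [cyl_Icc_eq_wordCyl, hx, measure_wordCyl_eq hshift] at h
  exact ENNReal.toReal_pos h.ne' (measure_ne_top _ _)

lemma exists_le_wordProb {P : Measure (Conf N)} [IsProbabilityMeasure P]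
    (hshift : Measure.map shiftMap P = P) (hpos : PosCyl P) (n : ℕ) :
    ∃ ε : ℝ, 0 < ε ∧ ε < 1 ∧
      ∀ l : List (Pat N), l.length = n → ε ≤ wordProb P l := by
  obtain ⟨v₀, -, hmin⟩ := Finset.exists_min_image Finset.univ
    (fun v : Fin n → Pat N => wordProb P (List.ofFn v)) Finset.univ_nonempty
  have h₀ := wordProb_pos hshift hpos (List.ofFn v₀)
  have h₁ := wordProb_le_one P (List.ofFn v₀)
  refine ⟨wordProb P (List.ofFn v₀) / 2, by positivity, by linarith, fun l hl => ?_⟩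
  obtain ⟨v, rfl⟩ := List.exists_ofFn_eq hl
  linarith [hmin v (Finset.mem_univ v)]

lemma wordProb_concat_div {P : Measure (Conf N)} {D : ℕ} (hshift : Measure.map shiftMap P = P)
    (hMarkov : MarkovOrder P D) {l : List (Pat N)} (hl : D ≤ l.length) (c : Pat N) :
    wordProb P (l ++ [c]) / wordProb P l
      = wordProb P (l.rtake D ++ [c]) / wordProb P (l.rtake D) := by
  obtain ⟨x, hx⟩ := exists_wordAt_eq (-(l.length : ℤ)) l
  have h := hMarkov c l.length hl x
  rw [condProb_cyl_Icc, condProb_cyl_Icc, ← wordAt_rtake hl, hx] at h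
  simpa only [wordProb, measure_wordCyl_eq hshift] using h

lemma wordProb_append_div {P : Measure (Conf N)} [IsFiniteMeasure P] {D : ℕ}
    (hshift : Measure.map shiftMap P = P) (hpos : PosCyl P) (hMarkov : MarkovOrder P D)
    {l : List (Pat N)} (hl : D ≤ l.length) (v : List (Pat N)) :
    wordProb P (l ++ v) / wordProb P l
      = wordProb P (l.rtake D ++ v) / wordProb P (l.rtake D) := by
  have hP := wordProb_pos hshift hpos
  induction v using List.reverseRecOn with
  | nil => rw [List.append_nil, List.append_nil, div_self (hP _).ne', div_self (hP _).ne']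
  | append_singleton v c ih =>
    have hlv : D ≤ (l ++ v).length := by
      simp only [List.length_append]
      omega
    have hr : D ≤ (l.rtake D ++ v).length := by
      simp only [List.length_append, List.length_rtake_of_le hl]
      omega
    simp only [← List.append_assoc]
    calc wordProb P (l ++ v ++ [c]) / wordProb P l
        = wordProb P (l ++ v ++ [c]) / wordProb P (l ++ v)
            * (wordProb P (l ++ v) / wordProb P l) := (div_mul_div_cancel₀ (hP _).ne').symm
      _ = wordProb P (l.rtake D ++ v ++ [c]) / wordProb P (l.rtake D ++ v)
            * (wordProb P (l.rtake D ++ v) / wordProb P (l.rtake D)) := by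
        rw [ih, wordProb_concat_div hshift hMarkov hlv, wordProb_concat_div hshift hMarkov hr,
          List.rtake_append_rtake]
      _ = wordProb P (l.rtake D ++ v ++ [c]) / wordProb P (l.rtake D) :=
        div_mul_div_cancel₀ (hP _).ne'

lemma wordProb_append {P : Measure (Conf N)} [IsFiniteMeasure P] {D : ℕ}
    (hshift : Measure.map shiftMap P = P) (hpos : PosCyl P) (hMarkov : MarkovOrder P D)
    {l : List (Pat N)} (hl : D ≤ l.length) (v : List (Pat N)) :
    wordProb P (l ++ v)
      = wordProb P l * wordProb P (l.rtake D ++ v) / wordProb P (l.rtake D) := by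
  rw [mul_div_assoc, ← wordProb_append_div hshift hpos hMarkov hl,
    mul_div_cancel₀ _ (wordProb_pos hshift hpos l).ne']

lemma measurable_binMap (τ : ℕ) : Measurable (binMap (N := N) τ) := by
  refine measurable_pi_lambda _ fun m => measurable_pi_lambda _ fun k => ?_
  change Measurable fun ω : Conf N => (List.range τ).any fun i => ω (m * τ + i) k
  induction List.range τ with
  | nil => exact measurable_const
  | cons j L ih =>
    simp only [List.any_cons]
    exact (measurable_of_countable fun p : Bool × Bool => p.1 || p.2).comp
      (((measurable_pi_apply k).comp (measurable_pi_apply _)).prodMk ih)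

def binWord (τ L : ℕ) (u : List (Pat N)) : List (Pat N) :=
  List.ofFn fun i : Fin L => fun k => (List.range τ).any fun r => u.getD (i * τ + r) (zPat N) k

@[simp]
lemma length_binWord (τ L : ℕ) (u : List (Pat N)) : (binWord τ L u).length = L :=
  List.length_ofFn

lemma wordAt_binMap (τ : ℕ) (ω : Conf N) (n : ℤ) (L : ℕ) :
    wordAt (binMap τ ω) n L = binWord τ L (wordAt ω (n * τ) (L * τ)) := by
  refine congrArg List.ofFn (funext fun i => funext fun k => List.any_range_congr fun r hr => ?_)
  have hlt : i * τ + r < L * τ := by nlinarith [i.isLt]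
  rw [wordAt, List.getD_eq_getElem _ _ (by simpa using hlt), List.getElem_ofFn]
  exact congrArg (fun z => ω z k) (by push_cast; ring)

lemma binWord_append {τ L₁ L₂ : ℕ} {u₁ : List (Pat N)} (hu₁ : u₁.length = L₁ * τ)
    (u₂ : List (Pat N)) :
    binWord τ (L₁ + L₂) (u₁ ++ u₂) = binWord τ L₁ u₁ ++ binWord τ L₂ u₂ := by
  rw [binWord, List.ofFn_add]
  congr 1 <;> refine congrArg List.ofFn (funext fun i => funext fun k =>
    List.any_range_congr fun r hr => ?_)
  · rw [List.getD_append _ _ _ _ (by simp only [Fin.val_castLE]; nlinarith [i.isLt])]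
    rfl
  · rw [List.getD_append_right _ _ _ _ (by simp only [Fin.val_natAdd]; nlinarith)]
    simp only [Fin.val_natAdd, hu₁]
    rw [add_mul, add_assoc, Nat.add_sub_cancel_left]

lemma binWord_replicate {τ : ℕ} (hτ : 1 ≤ τ) (c : Pat N) :
    binWord τ 1 (List.replicate τ c) = [c] := by
  simp only [binWord, List.ofFn_succ, List.ofFn_zero, Fin.val_zero, zero_mul, zero_add,
    List.cons.injEq, and_true]
  funext k
  rw [List.any_range_congr (g := fun _ => c k) fun r hr => by simp [hr]]
  cases c k <;> simp [List.any_eq_true]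
  exact ⟨0, hτ⟩

lemma binWord_flatMap_replicate {τ : ℕ} (hτ : 1 ≤ τ) (t : List (Pat N)) :
    binWord τ t.length (t.flatMap (List.replicate τ)) = t := by
  induction t with
  | nil => rfl
  | cons c t ih =>
    rw [List.flatMap_cons, List.length_cons, add_comm,
      binWord_append (by simp), binWord_replicate hτ, ih, List.singleton_append]

lemma preimage_binMap_wordCyl (τ : ℕ) (n : ℤ) (s : List (Pat N)) :
    binMap τ ⁻¹' wordCyl n s = ⋃ v ∈ Finset.univ.filter
      (fun v : Fin (s.length * τ) → Pat N => binWord τ s.length (List.ofFn v) = s),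
        wordCyl (n * τ) (List.ofFn v) := by
  ext ω
  simp only [Set.mem_preimage, Set.mem_iUnion, Finset.mem_filter, Finset.mem_univ, true_and,
    exists_prop, mem_wordCyl_ofFn]
  refine ⟨fun (h : wordAt _ n s.length = s) =>
    ⟨_, (wordAt_binMap τ ω n _).symm.trans h, rfl⟩, ?_⟩
  rintro ⟨v, hv, rfl⟩
  exact (wordAt_binMap τ ω n s.length).trans hv

noncomputable def binnedJoint (P : Measure (Conf N)) (τ : ℕ) (z t : List (Pat N)) : ℝ :=
  ∑ v : Fin (t.length * τ) → Pat N,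
    if binWord τ t.length (List.ofFn v) = t then wordProb P (z ++ List.ofFn v) else 0

variable {P : Measure (Conf N)} {τ D : ℕ}

lemma binnedJoint_eq_measure [IsFiniteMeasure P] (hshift : Measure.map shiftMap P = P)
    (n : ℤ) (z t : List (Pat N)) :
    binnedJoint P τ z t
      = (P (wordCyl (n * τ - z.length) z ∩ binMap τ ⁻¹' wordCyl n t)).toReal := by
  rw [preimage_binMap_wordCyl, measure_inter_biUnion_wordCyl _ (measurableSet_wordCyl _ _),
    ENNReal.toReal_sum fun _ _ => measure_ne_top _ _, Finset.sum_filter]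
  refine Finset.sum_congr rfl fun v _ => ?_
  split_ifs
  · have h := wordCyl_append (n * τ - z.length) z (List.ofFn v)
    rw [sub_add_cancel] at h
    rw [← h, wordProb, measure_wordCyl_eq hshift (n * τ - z.length)]
  · rfl

lemma measure_map_binMap_wordCyl [IsFiniteMeasure P] (hshift : Measure.map shiftMap P = P)
    (n : ℤ) (s : List (Pat N)) :
    (Measure.map (binMap τ) P (wordCyl n s)).toReal = binnedJoint P τ [] s := by
  rw [Measure.map_apply (measurable_binMap τ) (measurableSet_wordCyl _ _),
    binnedJoint_eq_measure hshift n, wordCyl_nil, Set.univ_inter]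

lemma binnedJoint_nonneg (z t : List (Pat N)) : 0 ≤ binnedJoint P τ z t :=
  Finset.sum_nonneg fun _ _ => by split_ifs <;> simp [wordProb_nonneg]

lemma binnedJoint_pos [IsFiniteMeasure P] (hshift : Measure.map shiftMap P = P)
    (hpos : PosCyl P) (hτ : 1 ≤ τ) (z t : List (Pat N)) : 0 < binnedJoint P τ z t := by
  obtain ⟨v, hv⟩ := List.exists_ofFn_eq (l := t.flatMap (List.replicate τ))
    (n := t.length * τ) (by simp [List.length_flatMap, mul_comm])
  refine Finset.sum_pos' (fun _ _ => by split_ifs <;> simp [wordProb_nonneg])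
    ⟨v, Finset.mem_univ _, ?_⟩
  rw [if_pos (hv ▸ binWord_flatMap_replicate hτ t)]
  exact wordProb_pos hshift hpos _

lemma binnedJoint_concat_le [IsFiniteMeasure P] (hshift : Measure.map shiftMap P = P)
    (z t : List (Pat N)) (a : Pat N) : binnedJoint P τ z (t ++ [a]) ≤ binnedJoint P τ z t := by
  rw [binnedJoint_eq_measure hshift 0, binnedJoint_eq_measure hshift 0]
  refine ENNReal.toReal_mono (measure_ne_top _ _) (measure_mono ?_)
  rw [wordCyl_append]
  exact Set.inter_subset_inter_right _ (Set.preimage_mono Set.inter_subset_left)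

lemma binnedJoint_nil_eq_sum [IsFiniteMeasure P] (hshift : Measure.map shiftMap P = P)
    (D : ℕ) (t : List (Pat N)) :
    binnedJoint P τ [] t = ∑ z : Fin D → Pat N, binnedJoint P τ (List.ofFn z) t := by
  rw [binnedJoint_eq_measure hshift 0, measure_eq_sum_inter_wordCyl P
    ((measurableSet_wordCyl _ _).inter (measurable_binMap τ (measurableSet_wordCyl _ _))) (-D) D,
    ENNReal.toReal_sum fun _ _ => measure_ne_top _ _]
  refine Finset.sum_congr rfl fun z _ => ?_
  rw [binnedJoint_eq_measure hshift 0, List.length_nil, wordCyl_nil, Set.univ_inter,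
    Set.inter_comm, List.length_ofFn]
  simp

/-- By the Markov property, after `z ++ u` the continuation `t` only sees the hidden state
`(z ++ u).rtake D`. -/
noncomputable def splitWeight (P : Measure (Conf N)) (τ D : ℕ) (z w t : List (Pat N))
    (u : Fin (w.length * τ) → Pat N) : ℝ :=
  if binWord τ w.length (List.ofFn u) = w then
    wordProb P (z ++ List.ofFn u) * binnedJoint P τ ((z ++ List.ofFn u).rtake D) t
      / wordProb P ((z ++ List.ofFn u).rtake D)
  else 0

lemma splitWeight_nonneg (z w t : List (Pat N)) (u : Fin (w.length * τ) → Pat N) :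
    0 ≤ splitWeight P τ D z w t u := by
  unfold splitWeight
  split_ifs
  · exact div_nonneg (mul_nonneg (wordProb_nonneg _ _) (binnedJoint_nonneg _ _))
      (wordProb_nonneg _ _)
  · rfl

lemma binnedJoint_append [IsFiniteMeasure P] (hshift : Measure.map shiftMap P = P)
    (hpos : PosCyl P) (hMarkov : MarkovOrder P D) {z : List (Pat N)} (hz : D ≤ z.length)
    (w t : List (Pat N)) :
    binnedJoint P τ z (w ++ t) = ∑ u, splitWeight P τ D z w t u := by
  unfold binnedJoint splitWeight
  rw [sum_ofFn_append (by rw [List.length_append, add_mul])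
    fun l => if binWord τ (w ++ t).length l = w ++ t then wordProb P (z ++ l) else 0]
  refine Finset.sum_congr rfl fun u₁ _ => ?_
  simp only [List.length_append, binWord_append (List.length_ofFn (f := u₁))]
  by_cases hw : binWord τ w.length (List.ofFn u₁) = w
  · simp only [hw, List.append_cancel_left_eq, if_true]
    rw [binnedJoint, Finset.mul_sum, Finset.sum_div]
    refine Finset.sum_congr rfl fun u₂ _ => ?_
    split_ifs
    · rw [← List.append_assoc, wordProb_append hshift hpos hMarkov (by simp; omega)]
    · simp
  · rw [if_neg hw]
    exact Finset.sum_eq_zero fun u₂ _ => if_neg fun h => hw (List.append_inj_left h (by simp))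

noncomputable def binnedKernel (P : Measure (Conf N)) (τ : ℕ) (a : Pat N) (z t : List (Pat N)) :
    ℝ :=
  binnedJoint P τ z (t ++ [a]) / binnedJoint P τ z t

lemma binnedKernel_nonneg (a : Pat N) (z t : List (Pat N)) : 0 ≤ binnedKernel P τ a z t :=
  div_nonneg (binnedJoint_nonneg _ _) (binnedJoint_nonneg _ _)

lemma binnedKernel_le_one [IsFiniteMeasure P] (hshift : Measure.map shiftMap P = P)
    (a : Pat N) (z t : List (Pat N)) : binnedKernel P τ a z t ≤ 1 :=
  div_le_one_of_le₀ (binnedJoint_concat_le hshift z t a) (binnedJoint_nonneg _ _)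

lemma binnedJoint_append_concat [IsFiniteMeasure P] (hshift : Measure.map shiftMap P = P)
    (hpos : PosCyl P) (hτ : 1 ≤ τ) (hMarkov : MarkovOrder P D) {z : List (Pat N)}
    (hz : D ≤ z.length) (a : Pat N) (w t : List (Pat N)) :
    binnedJoint P τ z (w ++ t ++ [a])
      = ∑ u, splitWeight P τ D z w t u * binnedKernel P τ a ((z ++ List.ofFn u).rtake D) t := by
  rw [List.append_assoc, binnedJoint_append hshift hpos hMarkov hz]
  refine Finset.sum_congr rfl fun u _ => ?_
  unfold splitWeight binnedKernel
  split_ifs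
  · have := (binnedJoint_pos hshift hpos hτ ((z ++ List.ofFn u).rtake D) t).ne'
    field_simp
  · rw [zero_mul]

/-- `z` ranges over the hidden states: the last `D` unbinned symbols before the binned word `t`. -/
noncomputable def kernelInf (P : Measure (Conf N)) (τ D : ℕ) (a : Pat N) (t : List (Pat N)) :
    ℝ :=
  Finset.univ.inf' Finset.univ_nonempty fun z : Fin D → Pat N =>
    binnedKernel P τ a (List.ofFn z) t

noncomputable def kernelSup (P : Measure (Conf N)) (τ D : ℕ) (a : Pat N) (t : List (Pat N)) :
    ℝ :=
  Finset.univ.sup' Finset.univ_nonempty fun z : Fin D → Pat N =>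
    binnedKernel P τ a (List.ofFn z) t

noncomputable def kernelOsc (P : Measure (Conf N)) (τ D : ℕ) (a : Pat N) (t : List (Pat N)) :
    ℝ :=
  kernelSup P τ D a t - kernelInf P τ D a t

lemma binnedKernel_mem_Icc {z : List (Pat N)} (hz : z.length = D) (a : Pat N) (t : List (Pat N)) :
    binnedKernel P τ a z t ∈ Set.Icc (kernelInf P τ D a t) (kernelSup P τ D a t) := by
  obtain ⟨z, rfl⟩ := List.exists_ofFn_eq hz
  exact ⟨Finset.inf'_le _ (Finset.mem_univ z),
    Finset.le_sup' (fun z : Fin D → Pat N => binnedKernel P τ a (List.ofFn z) t)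
      (Finset.mem_univ z)⟩

lemma binnedJoint_concat_bounds [IsFiniteMeasure P]
    (hshift : Measure.map shiftMap P = P) (hpos : PosCyl P) (hτ : 1 ≤ τ)
    (hMarkov : MarkovOrder P D) {z : List (Pat N)} (hz : D ≤ z.length) (a : Pat N)
    (w t : List (Pat N)) :
    kernelInf P τ D a t * binnedJoint P τ z (w ++ t) ≤ binnedJoint P τ z (w ++ t ++ [a]) ∧
      binnedJoint P τ z (w ++ t ++ [a]) ≤ kernelSup P τ D a t * binnedJoint P τ z (w ++ t) := by
  rw [binnedJoint_append_concat hshift hpos hτ hMarkov hz,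
    binnedJoint_append hshift hpos hMarkov hz, Finset.mul_sum, Finset.mul_sum]
  have hk (u : Fin (w.length * τ) → Pat N) := binnedKernel_mem_Icc (P := P) (τ := τ)
    (List.length_rtake_of_le (l := z ++ List.ofFn u) (n := D) (by simp; omega)) a t
  have hw (u : Fin (w.length * τ) → Pat N) := splitWeight_nonneg (P := P) (D := D) z w t u
  exact ⟨Finset.sum_le_sum fun u _ => by nlinarith [(hk u).1, hw u],
    Finset.sum_le_sum fun u _ => by nlinarith [(hk u).2, hw u]⟩

lemma binnedKernel_nil_mem_Icc [IsFiniteMeasure P]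
    (hshift : Measure.map shiftMap P = P) (hpos : PosCyl P) (hτ : 1 ≤ τ)
    (hMarkov : MarkovOrder P D) (a : Pat N) (w t : List (Pat N)) :
    binnedKernel P τ a [] (w ++ t) ∈ Set.Icc (kernelInf P τ D a t) (kernelSup P τ D a t) := by
  have hden := binnedJoint_pos hshift hpos hτ [] (w ++ t)
  rw [binnedKernel, Set.mem_Icc, le_div_iff₀ hden, div_le_iff₀ hden,
    binnedJoint_nil_eq_sum hshift D, binnedJoint_nil_eq_sum hshift D, Finset.mul_sum,
    Finset.mul_sum]
  have h (z : Fin D → Pat N) := binnedJoint_concat_bounds hshift hpos hτ hMarkov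
    (z := List.ofFn z) (by simp) a w t
  exact ⟨Finset.sum_le_sum fun z _ => (h z).1, Finset.sum_le_sum fun z _ => (h z).2⟩

lemma le_length_ofFn (hτ : 1 ≤ τ) {t₀ : List (Pat N)} (ht₀ : t₀.length = D)
    (u : Fin (t₀.length * τ) → Pat N) : D ≤ (List.ofFn u).length := by
  rw [List.length_ofFn, ht₀]
  exact Nat.le_mul_of_pos_right D hτ

lemma mul_splitWeight_le [IsProbabilityMeasure P] {ε : ℝ} (hτ : 1 ≤ τ)
    (hε : ∀ l : List (Pat N), l.length = D + D * τ → ε ≤ wordProb P l)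
    {z z' t₀ : List (Pat N)} (hz : z.length = D) (ht₀ : t₀.length = D)
    (t : List (Pat N)) (u : Fin (t₀.length * τ) → Pat N) :
    ε * splitWeight P τ D z' t₀ t u ≤ splitWeight P τ D z t₀ t u := by
  have hu := le_length_ofFn hτ ht₀ u
  unfold splitWeight
  split_ifs
  · rw [List.rtake_append_of_le_length hu, List.rtake_append_of_le_length hu, mul_div_assoc,
      mul_div_assoc, ← mul_assoc]
    have hc := div_nonneg (binnedJoint_nonneg (P := P) (τ := τ) ((List.ofFn u).rtake D) t)
      (wordProb_nonneg P ((List.ofFn u).rtake D))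
    have hzu := hε (z ++ List.ofFn u) (by simp [hz, ht₀])
    have h0 := wordProb_nonneg P (z' ++ List.ofFn u)
    have h1 := wordProb_le_one P (z' ++ List.ofFn u)
    have h2 := wordProb_nonneg P (z ++ List.ofFn u)
    refine mul_le_mul_of_nonneg_right ?_ hc
    nlinarith [mul_nonneg (sub_nonneg.2 hzu) h0, mul_nonneg h2 (sub_nonneg.2 h1)]
  · rw [mul_zero]

lemma binnedKernel_append_eq_div [IsFiniteMeasure P] (hshift : Measure.map shiftMap P = P)
    (hpos : PosCyl P) (hτ : 1 ≤ τ) (hMarkov : MarkovOrder P D) {z t₀ : List (Pat N)}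
    (hz : z.length = D) (ht₀ : t₀.length = D) (a : Pat N) (t : List (Pat N)) :
    binnedKernel P τ a z (t₀ ++ t)
      = (∑ u, splitWeight P τ D z t₀ t u * binnedKernel P τ a ((List.ofFn u).rtake D) t)
          / ∑ u, splitWeight P τ D z t₀ t u := by
  rw [binnedKernel, binnedJoint_append_concat hshift hpos hτ hMarkov hz.ge,
    binnedJoint_append hshift hpos hMarkov hz.ge]
  congr 1
  refine Finset.sum_congr rfl fun u _ => ?_
  rw [List.rtake_append_of_le_length (le_length_ofFn hτ ht₀ u)]

lemma kernelOsc_append_le [IsProbabilityMeasure P] (hshift : Measure.map shiftMap P = P)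
    (hpos : PosCyl P) (hτ : 1 ≤ τ) (hMarkov : MarkovOrder P D) {ε : ℝ} (hε0 : 0 ≤ ε)
    (hε : ∀ l : List (Pat N), l.length = D + D * τ → ε ≤ wordProb P l)
    (a : Pat N) {t₀ : List (Pat N)} (ht₀ : t₀.length = D) (t : List (Pat N)) :
    kernelOsc P τ D a (t₀ ++ t) ≤ (1 - ε ^ 2) * kernelOsc P τ D a t := by
  refine Finset.sup'_sub_inf'_le _ fun z _ z' _ => ?_
  have hT (z : Fin D → Pat N) : 0 < ∑ u, splitWeight P τ D (List.ofFn z) t₀ t u := by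
    rw [← binnedJoint_append hshift hpos hMarkov (by simp)]
    exact binnedJoint_pos hshift hpos hτ _ _
  rw [binnedKernel_append_eq_div hshift hpos hτ hMarkov List.length_ofFn ht₀,
    binnedKernel_append_eq_div hshift hpos hτ hMarkov List.length_ofFn ht₀]
  exact div_sum_sub_div_sum_le hε0 (splitWeight_nonneg _ _ _)
    (mul_splitWeight_le hτ hε List.length_ofFn ht₀ t)
    (mul_splitWeight_le hτ hε List.length_ofFn ht₀ t) (hT z) (hT z')
    fun u => binnedKernel_mem_Icc (List.length_rtake_of_le (le_length_ofFn hτ ht₀ u)) a t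

lemma kernelOsc_le_one [IsFiniteMeasure P] (hshift : Measure.map shiftMap P = P) (a : Pat N)
    (t : List (Pat N)) : kernelOsc P τ D a t ≤ 1 := by
  have hsup : kernelSup P τ D a t ≤ 1 :=
    Finset.sup'_le _ _ fun z _ => binnedKernel_le_one hshift a _ t
  have hinf : 0 ≤ kernelInf P τ D a t :=
    Finset.le_inf' _ _ fun z _ => binnedKernel_nonneg a _ t
  rw [kernelOsc]
  linarith

lemma kernelOsc_le_pow [IsProbabilityMeasure P] (hshift : Measure.map shiftMap P = P)
    (hpos : PosCyl P) (hD : 1 ≤ D) (hτ : 1 ≤ τ) (hMarkov : MarkovOrder P D) {ε : ℝ}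
    (hε0 : 0 ≤ ε) (hε1 : ε ≤ 1)
    (hε : ∀ l : List (Pat N), l.length = D + D * τ → ε ≤ wordProb P l)
    (a : Pat N) (t : List (Pat N)) :
    kernelOsc P τ D a t ≤ (1 - ε ^ 2) ^ (t.length / D) := by
  induction h : t.length using Nat.strong_induction_on generalizing t with
  | _ n ih =>
    rcases lt_or_ge n D with hnD | hnD
    · rw [Nat.div_eq_of_lt hnD, pow_zero]
      exact kernelOsc_le_one hshift a t
    · rw [← List.take_append_drop D t, Nat.div_eq_sub_div hD hnD, pow_succ']
      calc _ ≤ (1 - ε ^ 2) * kernelOsc P τ D a (t.drop D) :=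
            kernelOsc_append_le hshift hpos hτ hMarkov hε0 hε a (by simp; omega) _
        _ ≤ (1 - ε ^ 2) * (1 - ε ^ 2) ^ ((n - D) / D) :=
            mul_le_mul_of_nonneg_left (ih _ (by omega) _ (by simp [h])) (by nlinarith)

lemma wordAt_eq_of_agree {x y : Conf N} {k : ℕ}
    (h : ∀ j : ℕ, 1 ≤ j → j ≤ k → x (-(j : ℤ)) = y (-(j : ℤ))) :
    wordAt x (-k) k = wordAt y (-k) k :=
  congrArg List.ofFn <| funext fun i => by
    have := h (k - i) (by omega) (by omega)
    rwa [show -((k - i : ℕ) : ℤ) = -k + i by omega] at this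

lemma condProb_map_binMap_mem_Icc [IsFiniteMeasure P] (hshift : Measure.map shiftMap P = P)
    (hpos : PosCyl P) (hτ : 1 ≤ τ) (hMarkov : MarkovOrder P D) (a : Pat N) (x : Conf N)
    {k m : ℕ} (hkm : k ≤ m) :
    condProb (Measure.map (binMap τ) P) {ω | ω 0 = a} (cyl (Finset.Icc (-(m : ℤ)) (-1)) x)
      ∈ Set.Icc (kernelInf P τ D a (wordAt x (-k) k))
          (kernelSup P τ D a (wordAt x (-k) k)) := by
  obtain ⟨j, rfl⟩ := Nat.exists_eq_add_of_le' hkm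
  rw [condProb_cyl_Icc, measure_map_binMap_wordCyl hshift, measure_map_binMap_wordCyl hshift,
    wordAt_add, show -((j + k : ℕ) : ℤ) + j = -k by push_cast; ring]
  exact binnedKernel_nil_mem_Icc hshift hpos hτ hMarkov a _ _

end BinnedKernel


open BinnedKernel

theorem binned_kernel_exponential_continuity_general
    {N D τ : ℕ} (hD : 1 ≤ D) (hτ : 1 ≤ τ)
    (P : Measure (Conf N)) [IsProbabilityMeasure P]
    (hshift : Measure.map shiftMap P = P)
    (hpos : PosCyl P) (hMarkov : MarkovOrder P D) :
    ∃ C > (0 : ℝ), ∃ α > (0 : ℝ),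
      ∀ k : ℕ, 1 ≤ k → ∀ m m' : ℕ, k ≤ m → k ≤ m' →
        ∀ a : Pat N, ∀ x y : ℤ → Pat N,
          (∀ j : ℕ, 1 ≤ j → j ≤ k → x (-(j : ℤ)) = y (-(j : ℤ))) →
          |condProb (Measure.map (binMap τ) P) {ω | ω 0 = a}
              (cyl (Finset.Icc (-(m : ℤ)) (-1)) x)
            - condProb (Measure.map (binMap τ) P) {ω | ω 0 = a}
              (cyl (Finset.Icc (-(m' : ℤ)) (-1)) y)|
          ≤ C * Real.exp (-α * (k : ℝ)) := by
  obtain ⟨ε, hε0, hε1, hε⟩ := exists_le_wordProb hshift hpos (D + D * τ)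
  have hβ0 : 0 < 1 - ε ^ 2 := by nlinarith
  have hβ1 : 1 - ε ^ 2 < 1 := by nlinarith
  refine ⟨(1 - ε ^ 2)⁻¹, inv_pos.mpr hβ0, -Real.log (1 - ε ^ 2) / D,
    div_pos (neg_pos.mpr (Real.log_neg hβ0 hβ1)) (by exact_mod_cast hD), ?_⟩
  intro k _ m m' hkm hkm' a x y hxy
  have hx := condProb_map_binMap_mem_Icc hshift hpos hτ hMarkov a x hkm
  have hy := condProb_map_binMap_mem_Icc hshift hpos hτ hMarkov a y hkm'
  rw [wordAt_eq_of_agree hxy] at hx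
  calc _ ≤ kernelOsc P τ D a (wordAt y (-k) k) := Real.dist_le_of_mem_Icc hx hy
    _ ≤ (1 - ε ^ 2) ^ (k / D) := by
      simpa using
        kernelOsc_le_pow hshift hpos hD hτ hMarkov hε0.le hε1.le hε a (wordAt y (-k) k)
    _ ≤ _ := pow_div_le_inv_mul_exp hβ0 hβ1.le k D

/-- **Proposition 2** (exponential continuity rate of the binned transition kernel,
finite-past form): there are `C > 0` and `α > 0` such that whenever two finite pasts
of lengths `m, m' ≥ k` agree on the last `k` coordinates, the corresponding binned
conditional probabilities of the present symbol differ by at most `C e^{-αk}`. -/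
theorem binned_kernel_exponential_continuity
    {N D τ : ℕ} (hN : 1 ≤ N) (hD : 1 ≤ D) (hτ : 1 ≤ τ)
    (P : Measure (Conf N)) [IsProbabilityMeasure P]
    (hshift : Measure.map shiftMap P = P)
    (hpos : PosCyl P) (hMarkov : MarkovOrder P D) :
    ∃ C > (0 : ℝ), ∃ α > (0 : ℝ),
      ∀ k : ℕ, 1 ≤ k → ∀ m m' : ℕ, k ≤ m → k ≤ m' →
        ∀ a : Pat N, ∀ x y : ℤ → Pat N,
          (∀ j : ℕ, 1 ≤ j → j ≤ k → x (-(j : ℤ)) = y (-(j : ℤ))) →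
          |condProb (Measure.map (binMap τ) P) {ω | ω 0 = a}
              (cyl (Finset.Icc (-(m : ℤ)) (-1)) x)
            - condProb (Measure.map (binMap τ) P) {ω | ω 0 = a}
              (cyl (Finset.Icc (-(m' : ℤ)) (-1)) y)|
          ≤ C * Real.exp (-α * (k : ℝ)) :=
  binned_kernel_exponential_continuity_general hD hτ P hshift hpos hMarkov
end

section
/- Markov-type identity when the conditioning past contains a 0 (equation (eq:MarkovSimple0)). For the binned process one has P⁽ᵇ⁾(X₃ = 0 | X₂ = 1, X₁ = 0, X₀ = 1) = P⁽ᵇ⁾(X₃ = 0 | X₂ = 1, X₁ = 0); equivalently, in cross-multiplied form, P⁽ᵇ⁾(X₃ = 0 ∧ X₂ = 1 ∧ X₁ = 0 ∧ X₀ = 1) · P⁽ᵇ⁾(X₂ = 1 ∧ X₁ = 0) = P⁽ᵇ⁾(X₃ = 0 ∧ X₂ = 1 ∧ X₁ = 0) · P⁽ᵇ⁾(X₂ = 1 ∧ X₁ = 0 ∧ X₀ = 1). -/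
open MeasureTheory Filter

/-- Spike trains of a single neuron: bi-infinite binary sequences. -/
abbrev Conf1 : Type := ℤ → Bool

/-- Conditional probability of cylinder sets, defined as the ratio of the
corresponding cylinder probabilities. -/
noncomputable def condProb1 (P : Measure Conf1) (E C : Set Conf1) : ℝ :=
  (P (E ∩ C)).toReal / (P C).toReal

/-- The left shift. -/
def shiftMap1 : Conf1 → Conf1 := fun ω n => ω (n + 1)

/-- The binning map with window `τ = 2`: `bin2 ω m = ω(2m) || ω(2m+1)`. -/
def bin2 (ω : Conf1) : Conf1 := fun m => ω (2 * m) || ω (2 * m + 1)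

/-- `P` is (stationary) Markov of order `1`: conditioning the present on any finite
past of length `m ≥ 1` equals conditioning on the last coordinate. -/
def MarkovOne (P : Measure Conf1) : Prop :=
  ∀ (a : Bool) (m : ℕ), 1 ≤ m → ∀ w : ℤ → Bool,
    condProb1 P {ω | ω 0 = a} {ω | ∀ j ∈ Finset.Icc (-(m : ℤ)) (-1), ω j = w j}
      = condProb1 P {ω | ω 0 = a} {ω | ω (-1) = w (-1)}

/-- Every finite cylinder has strictly positive probability. -/
def PosCyl1 (P : Measure Conf1) : Prop :=
  ∀ (s : Finset ℤ) (v : ℤ → Bool), 0 < P {ω | ∀ n ∈ s, ω n = v n}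

def cylSet (a b : ℤ) (w : ℤ → Bool) : Set Conf1 := {ω | ∀ j ∈ Finset.Icc a b, ω j = w j}

lemma measCoord (j : ℤ) (c : Bool) : MeasurableSet {ω : Conf1 | ω j = c} := by
  have : {ω : Conf1 | ω j = c} = (fun ω : Conf1 => ω j) ⁻¹' {c} := rfl
  rw [this]
  exact (measurable_pi_apply j) (measurableSet_singleton c)

lemma measCyl (a b : ℤ) (w : ℤ → Bool) : MeasurableSet (cylSet a b w) := by
  have : cylSet a b w = ⋂ j ∈ Finset.Icc a b, {ω : Conf1 | ω j = w j} := by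
    ext ω; simp [cylSet]
  rw [this]
  exact MeasurableSet.biInter (Finset.Icc a b).countable_toSet fun j _ => measCoord j (w j)

lemma measBin : Measurable bin2 := by
  apply measurable_pi_lambda
  intro m
  exact (Measurable.of_discrete (f := fun p : Bool × Bool => p.1 || p.2)).comp
    ((measurable_pi_apply (2*m)).prodMk (measurable_pi_apply (2*m+1)) :
      Measurable fun ω : Conf1 => (ω (2*m), ω (2*m+1)))

lemma measShift : Measurable shiftMap1 :=
  measurable_pi_lambda _ fun n => measurable_pi_apply (n + 1)

lemma cylSet_congr {a b : ℤ} {w w' : ℤ → Bool} (h : ∀ j ∈ Finset.Icc a b, w j = w' j) :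
    cylSet a b w = cylSet a b w' := by
  ext ω; constructor <;> intro hω j hj
  · rw [hω j hj, h j hj]
  · rw [hω j hj, h j hj]

lemma shift_one (P : Measure Conf1) (hshift : Measure.map shiftMap1 P = P)
    (a b : ℤ) (w : ℤ → Bool) :
    P (cylSet a b w) = P (cylSet (a+1) (b+1) (fun j => w (j-1))) := by
  conv_lhs => rw [← hshift]
  rw [Measure.map_apply measShift (measCyl a b w)]
  congr 1
  ext ω
  simp only [Set.mem_preimage, cylSet, Set.mem_setOf_eq, shiftMap1, Finset.mem_Icc]
  constructor
  · intro h j hj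
    have := h (j - 1) (by omega)
    simpa [sub_add_cancel] using this
  · intro h j hj
    have := h (j + 1) (by omega)
    simpa using this

lemma shift_n (P : Measure Conf1) (hshift : Measure.map shiftMap1 P = P)
    (n : ℕ) (a b : ℤ) (w : ℤ → Bool) :
    P (cylSet a b w) = P (cylSet (a+n) (b+n) (fun j => w (j-n))) := by
  induction n with
  | zero => simp
  | succ n ih =>
    rw [ih, shift_one P hshift]
    congr 1
    have h1 : a + (n:ℤ) + 1 = a + ((n:ℕ)+1 : ℕ) := by push_cast; ring
    have h2 : b + (n:ℤ) + 1 = b + ((n:ℕ)+1 : ℕ) := by push_cast; ring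
    rw [h1, h2]
    exact congrArg (cylSet _ _) (funext fun j => congrArg w (by push_cast; ring))


noncomputable def tp (P : Measure Conf1) (y x : Bool) : ℝ :=
  condProb1 P {ω | ω 0 = y} {ω | ω (-1) = x}

lemma markov_step (P : Measure Conf1) [IsProbabilityMeasure P]
    (hshift : Measure.map shiftMap1 P = P) (hpos : PosCyl1 P) (hMarkov : MarkovOne P)
    (a b : ℤ) (hab : a ≤ b) (hb : 0 ≤ b) (w : ℤ → Bool) :
    (P (cylSet a (b+1) w)).toReal
      = (P (cylSet a b w)).toReal * tp P (w (b+1)) (w b) := by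
  set n : ℕ := (b+1).toNat with hn
  have hnz : (n : ℤ) = b + 1 := by omega
  set w' : ℤ → Bool := fun j => w (j + (b+1)) with hw'
  set a' : ℤ := a - (b+1) with ha'
  -- identify shifted cylinders
  have h1 : P (cylSet a (b+1) w) = P (cylSet a' 0 w') := by
    rw [shift_n P hshift n a' 0 w']
    have e1 : a' + (n:ℤ) = a := by omega
    have e2 : (0:ℤ) + (n:ℤ) = b + 1 := by omega
    rw [e1, e2]
    congr 1
    exact (congrArg (cylSet _ _) (funext fun j => congrArg w (by omega))).symm
  have h2 : P (cylSet a b w) = P (cylSet a' (-1) w') := by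
    rw [shift_n P hshift n a' (-1) w']
    have e1 : a' + (n:ℤ) = a := by omega
    have e2 : (-1:ℤ) + (n:ℤ) = b := by omega
    rw [e1, e2]
    congr 1
    exact (congrArg (cylSet _ _) (funext fun j => congrArg w (by omega))).symm
  have h3 : cylSet a' 0 w' = {ω : Conf1 | ω 0 = w' 0} ∩ cylSet a' (-1) w' := by
    ext ω
    simp only [cylSet, Set.mem_setOf_eq, Set.mem_inter_iff, Finset.mem_Icc]
    constructor
    · intro h
      exact ⟨h 0 ⟨by omega, le_refl 0⟩, fun j hj => h j ⟨hj.1, by omega⟩⟩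
    · rintro ⟨h0, h⟩ j hj
      rcases eq_or_lt_of_le hj.2 with rfl | hlt
      · exact h0
      · exact h j ⟨hj.1, by omega⟩
  set m : ℕ := (b + 1 - a).toNat with hm
  have hm1 : 1 ≤ m := by omega
  have hM := hMarkov (w' 0) m hm1 w'
  have hms : -((m:ℕ) : ℤ) = a' := by omega
  rw [hms] at hM
  have hsets : {ω : Conf1 | ∀ j ∈ Finset.Icc a' (-1), ω j = w' j} = cylSet a' (-1) w' := rfl
  rw [hsets] at hM
  unfold condProb1 at hM
  have hdpos : 0 < (P (cylSet a' (-1) w')).toReal :=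
    ENNReal.toReal_pos (hpos (Finset.Icc a' (-1)) w').ne' (measure_ne_top _ _)
  have hnum : (P ({ω : Conf1 | ω 0 = w' 0} ∩ cylSet a' (-1) w')).toReal
      = (P (cylSet a' (-1) w')).toReal * tp P (w' 0) (w' (-1)) := by
    have := (div_eq_iff hdpos.ne').mp hM
    rw [this]
    unfold tp condProb1
    ring
  have hw0 : w' 0 = w (b+1) := congrArg w (by omega)
  have hwm1 : w' (-1) = w b := congrArg w (by omega)
  rw [h1, h2, h3, hnum, hw0, hwm1]

lemma chain7 (P : Measure Conf1) [IsProbabilityMeasure P]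
    (hshift : Measure.map shiftMap1 P = P) (hpos : PosCyl1 P) (hMarkov : MarkovOne P)
    (a : ℤ) (ha : a ≤ 3) (w : ℤ → Bool) :
    (P (cylSet a 7 w)).toReal = (P (cylSet a 3 w)).toReal
      * (tp P (w 4) (w 3) * tp P (w 5) (w 4) * tp P (w 6) (w 5) * tp P (w 7) (w 6)) := by
  have h4 := markov_step P hshift hpos hMarkov a 3 (by omega) (by norm_num) w
  have h5 := markov_step P hshift hpos hMarkov a 4 (by omega) (by norm_num) w
  have h6 := markov_step P hshift hpos hMarkov a 5 (by omega) (by norm_num) w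
  have h7 := markov_step P hshift hpos hMarkov a 6 (by omega) (by norm_num) w
  norm_num at h4 h5 h6 h7
  rw [h7, h6, h5, h4]; ring

lemma chain5 (P : Measure Conf1) [IsProbabilityMeasure P]
    (hshift : Measure.map shiftMap1 P = P) (hpos : PosCyl1 P) (hMarkov : MarkovOne P)
    (a : ℤ) (ha : a ≤ 3) (w : ℤ → Bool) :
    (P (cylSet a 5 w)).toReal = (P (cylSet a 3 w)).toReal
      * (tp P (w 4) (w 3) * tp P (w 5) (w 4)) := by
  have h4 := markov_step P hshift hpos hMarkov a 3 (by omega) (by norm_num) w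
  have h5 := markov_step P hshift hpos hMarkov a 4 (by omega) (by norm_num) w
  norm_num at h4 h5
  rw [h5, h4]; ring

lemma split_coord (P : Measure Conf1) (S : Set Conf1) (hS : MeasurableSet S) (j : ℤ) :
    P S = P (S ∩ {ω | ω j = true}) + P (S ∩ {ω | ω j = false}) := by
  rw [← measure_inter_add_diff S (measCoord j true)]
  have h : S \ {ω : Conf1 | ω j = true} = S ∩ {ω | ω j = false} := by
    ext ω
    simp only [Set.mem_diff, Set.mem_inter_iff, Set.mem_setOf_eq]
    cases h : ω j <;> simp
  rw [h]

lemma measOr (i j : ℤ) : MeasurableSet {ω : Conf1 | (ω i || ω j) = true} := by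
  have h : {ω : Conf1 | (ω i || ω j) = true} = {ω | ω i = true} ∪ {ω | ω j = true} := by
    ext ω; simp [Bool.or_eq_true]
  rw [h]; exact (measCoord i true).union (measCoord j true)

lemma or_split (P : Measure Conf1) (S : Set Conf1) (hS : MeasurableSet S) (i j : ℤ) :
    P (S ∩ {ω | (ω i || ω j) = true})
      = P (S ∩ {ω | ω i = true ∧ ω j = true}) + P (S ∩ {ω | ω i = true ∧ ω j = false})
        + P (S ∩ {ω | ω i = false ∧ ω j = true}) := by
  rw [split_coord P (S ∩ {ω | (ω i || ω j) = true}) (hS.inter (measOr i j)) i]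
  rw [split_coord P (S ∩ {ω | (ω i || ω j) = true} ∩ {ω | ω i = true})
    ((hS.inter (measOr i j)).inter (measCoord i true)) j]
  have e1 : S ∩ {ω : Conf1 | (ω i || ω j) = true} ∩ {ω | ω i = true} ∩ {ω | ω j = true}
      = S ∩ {ω | ω i = true ∧ ω j = true} := by
    ext ω
    simp only [Set.mem_inter_iff, Set.mem_setOf_eq]
    cases h : ω i <;> cases h' : ω j <;> simp_all
  have e2 : S ∩ {ω : Conf1 | (ω i || ω j) = true} ∩ {ω | ω i = true} ∩ {ω | ω j = false}
      = S ∩ {ω | ω i = true ∧ ω j = false} := by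
    ext ω
    simp only [Set.mem_inter_iff, Set.mem_setOf_eq]
    cases h : ω i <;> cases h' : ω j <;> simp_all
  have e3 : S ∩ {ω : Conf1 | (ω i || ω j) = true} ∩ {ω | ω i = false}
      = S ∩ {ω | ω i = false ∧ ω j = true} := by
    ext ω
    simp only [Set.mem_inter_iff, Set.mem_setOf_eq]
    cases h : ω i <;> cases h' : ω j <;> simp_all
  rw [e1, e2, e3]

lemma measPair (i j : ℤ) (u v : Bool) : MeasurableSet {ω : Conf1 | ω i = u ∧ ω j = v} := by
  have h : {ω : Conf1 | ω i = u ∧ ω j = v} = {ω | ω i = u} ∩ {ω | ω j = v} := rfl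
  rw [h]; exact (measCoord i u).inter (measCoord j v)

lemma or_split2 (P : Measure Conf1) (S : Set Conf1) (hS : MeasurableSet S) :
    P (S ∩ {ω | (ω 0 || ω 1) = true} ∩ {ω | (ω 4 || ω 5) = true})
      = ((P (S ∩ {ω | (ω 0 = true ∧ ω 1 = true) ∧ ω 4 = true ∧ ω 5 = true})
          + P (S ∩ {ω | (ω 0 = true ∧ ω 1 = false) ∧ ω 4 = true ∧ ω 5 = true})
          + P (S ∩ {ω | (ω 0 = false ∧ ω 1 = true) ∧ ω 4 = true ∧ ω 5 = true}))
        + (P (S ∩ {ω | (ω 0 = true ∧ ω 1 = true) ∧ ω 4 = true ∧ ω 5 = false})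
          + P (S ∩ {ω | (ω 0 = true ∧ ω 1 = false) ∧ ω 4 = true ∧ ω 5 = false})
          + P (S ∩ {ω | (ω 0 = false ∧ ω 1 = true) ∧ ω 4 = true ∧ ω 5 = false})))
        + (P (S ∩ {ω | (ω 0 = true ∧ ω 1 = true) ∧ ω 4 = false ∧ ω 5 = true})
          + P (S ∩ {ω | (ω 0 = true ∧ ω 1 = false) ∧ ω 4 = false ∧ ω 5 = true})
          + P (S ∩ {ω | (ω 0 = false ∧ ω 1 = true) ∧ ω 4 = false ∧ ω 5 = true})) := by
  have key : ∀ u v : Bool,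
      P (S ∩ {ω | (ω 0 || ω 1) = true} ∩ {ω | ω 4 = u ∧ ω 5 = v})
        = P (S ∩ {ω | (ω 0 = true ∧ ω 1 = true) ∧ ω 4 = u ∧ ω 5 = v})
          + P (S ∩ {ω | (ω 0 = true ∧ ω 1 = false) ∧ ω 4 = u ∧ ω 5 = v})
          + P (S ∩ {ω | (ω 0 = false ∧ ω 1 = true) ∧ ω 4 = u ∧ ω 5 = v}) := by
    intro u v
    have e : S ∩ {ω : Conf1 | (ω 0 || ω 1) = true} ∩ {ω | ω 4 = u ∧ ω 5 = v}
        = S ∩ {ω | ω 4 = u ∧ ω 5 = v} ∩ {ω | (ω 0 || ω 1) = true} := by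
      ext ω; simp only [Set.mem_inter_iff, Set.mem_setOf_eq]; tauto
    rw [e, or_split P (S ∩ {ω | ω 4 = u ∧ ω 5 = v}) (hS.inter (measPair 4 5 u v)) 0 1]
    have e2 : ∀ a b : Bool, S ∩ {ω : Conf1 | ω 4 = u ∧ ω 5 = v} ∩ {ω | ω 0 = a ∧ ω 1 = b}
        = S ∩ {ω | (ω 0 = a ∧ ω 1 = b) ∧ ω 4 = u ∧ ω 5 = v} := by
      intro a b; ext ω; simp only [Set.mem_inter_iff, Set.mem_setOf_eq]; tauto
    rw [e2, e2, e2]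
  rw [or_split P (S ∩ {ω | (ω 0 || ω 1) = true}) (hS.inter (measOr 0 1)) 4 5,
    key, key, key]

/-- The word recording values at coordinates `0,1,4,5`, with `false` elsewhere. -/
def W (a b u v : Bool) : ℤ → Bool := fun j =>
  if j = 0 then a else if j = 1 then b else if j = 4 then u else if j = 5 then v else false

lemma cyl03W (a b u v : Bool) : cylSet 0 3 (W a b u v) = cylSet 0 3 (W a b true true) := by
  apply cylSet_congr
  intro j hj
  rw [Finset.mem_Icc] at hj
  obtain ⟨h1, h2⟩ := hj
  interval_cases j <;> norm_num [W]

lemma cyl23W (u v : Bool) : cylSet 2 3 (W true true u v) = cylSet 2 3 (W true true true true) := by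
  apply cylSet_congr
  intro j hj
  rw [Finset.mem_Icc] at hj
  obtain ⟨h1, h2⟩ := hj
  interval_cases j <;> norm_num [W]

lemma hterm1 (P : Measure Conf1) [IsProbabilityMeasure P]
    (hshift : Measure.map shiftMap1 P = P) (hpos : PosCyl1 P) (hMarkov : MarkovOne P)
    (a b u v : Bool) :
    (P (cylSet 0 7 (W a b u v))).toReal
      = (P (cylSet 0 3 (W a b true true))).toReal
        * (tp P u false * tp P v u * tp P false v * tp P false false) := by
  rw [chain7 P hshift hpos hMarkov 0 (by norm_num) (W a b u v), cyl03W]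
  norm_num [W]

lemma hterm2 (P : Measure Conf1) [IsProbabilityMeasure P]
    (hshift : Measure.map shiftMap1 P = P) (hpos : PosCyl1 P) (hMarkov : MarkovOne P)
    (a b u v : Bool) :
    (P (cylSet 0 5 (W a b u v))).toReal
      = (P (cylSet 0 3 (W a b true true))).toReal * (tp P u false * tp P v u) := by
  rw [chain5 P hshift hpos hMarkov 0 (by norm_num) (W a b u v), cyl03W]
  norm_num [W]

lemma hterm3 (P : Measure Conf1) [IsProbabilityMeasure P]
    (hshift : Measure.map shiftMap1 P = P) (hpos : PosCyl1 P) (hMarkov : MarkovOne P)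
    (u v : Bool) :
    (P (cylSet 2 7 (W true true u v))).toReal
      = (P (cylSet 2 3 (W true true true true))).toReal
        * (tp P u false * tp P v u * tp P false v * tp P false false) := by
  rw [chain7 P hshift hpos hMarkov 2 (by norm_num) (W true true u v), cyl23W]
  norm_num [W]

lemma hterm4 (P : Measure Conf1) [IsProbabilityMeasure P]
    (hshift : Measure.map shiftMap1 P = P) (hpos : PosCyl1 P) (hMarkov : MarkovOne P)
    (u v : Bool) :
    (P (cylSet 2 5 (W true true u v))).toReal
      = (P (cylSet 2 3 (W true true true true))).toReal * (tp P u false * tp P v u) := by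
  rw [chain5 P hshift hpos hMarkov 2 (by norm_num) (W true true u v), cyl23W]
  norm_num [W]


/-- Markov-type identity when the conditioning past contains a `0` (equation
(eq:MarkovSimple0)), identifying `0` with `false` and `1` with `true`:
`P⁽ᵇ⁾(X₃ = 0 | X₂ = 1, X₁ = 0, X₀ = 1) = P⁽ᵇ⁾(X₃ = 0 | X₂ = 1, X₁ = 0)`,
together with its cross-multiplied form. -/
theorem binned_markov_identity_past_contains_zero
    (P : Measure Conf1) [IsProbabilityMeasure P]
    (hshift : Measure.map shiftMap1 P = P)
    (hpos : PosCyl1 P) (hMarkov : MarkovOne P) :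
    condProb1 (Measure.map bin2 P) {x | x 3 = false}
        {x | x 2 = true ∧ x 1 = false ∧ x 0 = true}
      = condProb1 (Measure.map bin2 P) {x | x 3 = false}
        {x | x 2 = true ∧ x 1 = false}
    ∧ (Measure.map bin2 P) {x | x 3 = false ∧ x 2 = true ∧ x 1 = false ∧ x 0 = true}
        * (Measure.map bin2 P) {x | x 2 = true ∧ x 1 = false}
      = (Measure.map bin2 P) {x | x 3 = false ∧ x 2 = true ∧ x 1 = false}
        * (Measure.map bin2 P) {x | x 2 = true ∧ x 1 = false ∧ x 0 = true} := by
  set Q := Measure.map bin2 P with hQ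
  set S1 : Set Conf1 := {ω | ω 2 = false ∧ ω 3 = false ∧ ω 6 = false ∧ ω 7 = false} with hS1
  set S2 : Set Conf1 := {ω | ω 2 = false ∧ ω 3 = false} with hS2
  have mS1 : MeasurableSet S1 := by
    have h : S1 = {ω : Conf1 | ω 2 = false} ∩ ({ω | ω 3 = false} ∩ ({ω | ω 6 = false}
        ∩ {ω | ω 7 = false})) := rfl
    rw [h]
    exact (measCoord 2 false).inter ((measCoord 3 false).inter
      ((measCoord 6 false).inter (measCoord 7 false)))
  have mS2 : MeasurableSet S2 := by
    have h : S2 = {ω : Conf1 | ω 2 = false} ∩ {ω | ω 3 = false} := rfl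
    rw [h]
    exact (measCoord 2 false).inter (measCoord 3 false)
  -- measurability of the binned events
  have m1 : MeasurableSet {x : Conf1 | x 3 = false ∧ x 2 = true ∧ x 1 = false ∧ x 0 = true} := by
    have h : {x : Conf1 | x 3 = false ∧ x 2 = true ∧ x 1 = false ∧ x 0 = true}
        = {x : Conf1 | x 3 = false} ∩ ({x | x 2 = true} ∩ ({x | x 1 = false}
          ∩ {x | x 0 = true})) := rfl
    rw [h]
    exact (measCoord 3 false).inter ((measCoord 2 true).inter
      ((measCoord 1 false).inter (measCoord 0 true)))
  have m2 : MeasurableSet {x : Conf1 | x 2 = true ∧ x 1 = false ∧ x 0 = true} := by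
    have h : {x : Conf1 | x 2 = true ∧ x 1 = false ∧ x 0 = true}
        = {x : Conf1 | x 2 = true} ∩ ({x | x 1 = false} ∩ {x | x 0 = true}) := rfl
    rw [h]
    exact (measCoord 2 true).inter ((measCoord 1 false).inter (measCoord 0 true))
  have m3 : MeasurableSet {x : Conf1 | x 3 = false ∧ x 2 = true ∧ x 1 = false} := by
    have h : {x : Conf1 | x 3 = false ∧ x 2 = true ∧ x 1 = false}
        = {x : Conf1 | x 3 = false} ∩ ({x | x 2 = true} ∩ {x | x 1 = false}) := rfl
    rw [h]
    exact (measCoord 3 false).inter ((measCoord 2 true).inter (measCoord 1 false))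
  have m4 : MeasurableSet {x : Conf1 | x 2 = true ∧ x 1 = false} := by
    have h : {x : Conf1 | x 2 = true ∧ x 1 = false}
        = {x : Conf1 | x 2 = true} ∩ {x | x 1 = false} := rfl
    rw [h]
    exact (measCoord 2 true).inter (measCoord 1 false)
  -- preimages under bin2
  have hp1 : bin2 ⁻¹' {x : Conf1 | x 3 = false ∧ x 2 = true ∧ x 1 = false ∧ x 0 = true}
      = S1 ∩ {ω | (ω 0 || ω 1) = true} ∩ {ω | (ω 4 || ω 5) = true} := by
    ext ω
    simp only [Set.mem_preimage, Set.mem_setOf_eq, Set.mem_inter_iff, bin2, hS1,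
      Bool.or_eq_false_iff]
    norm_num
    tauto
  have hp2 : bin2 ⁻¹' {x : Conf1 | x 2 = true ∧ x 1 = false ∧ x 0 = true}
      = S2 ∩ {ω | (ω 0 || ω 1) = true} ∩ {ω | (ω 4 || ω 5) = true} := by
    ext ω
    simp only [Set.mem_preimage, Set.mem_setOf_eq, Set.mem_inter_iff, bin2, hS2,
      Bool.or_eq_false_iff]
    norm_num
    tauto
  have hp3 : bin2 ⁻¹' {x : Conf1 | x 3 = false ∧ x 2 = true ∧ x 1 = false}
      = S1 ∩ {ω | (ω 4 || ω 5) = true} := by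
    ext ω
    simp only [Set.mem_preimage, Set.mem_setOf_eq, Set.mem_inter_iff, bin2, hS1,
      Bool.or_eq_false_iff]
    norm_num
    tauto
  have hp4 : bin2 ⁻¹' {x : Conf1 | x 2 = true ∧ x 1 = false}
      = S2 ∩ {ω | (ω 4 || ω 5) = true} := by
    ext ω
    simp only [Set.mem_preimage, Set.mem_setOf_eq, Set.mem_inter_iff, bin2, hS2,
      Bool.or_eq_false_iff]
    norm_num
    tauto
  have q1 : Q {x : Conf1 | x 3 = false ∧ x 2 = true ∧ x 1 = false ∧ x 0 = true}
      = P (S1 ∩ {ω | (ω 0 || ω 1) = true} ∩ {ω | (ω 4 || ω 5) = true}) := by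
    rw [hQ, Measure.map_apply measBin m1, hp1]
  have q2 : Q {x : Conf1 | x 2 = true ∧ x 1 = false ∧ x 0 = true}
      = P (S2 ∩ {ω | (ω 0 || ω 1) = true} ∩ {ω | (ω 4 || ω 5) = true}) := by
    rw [hQ, Measure.map_apply measBin m2, hp2]
  have q3 : Q {x : Conf1 | x 3 = false ∧ x 2 = true ∧ x 1 = false}
      = P (S1 ∩ {ω | (ω 4 || ω 5) = true}) := by
    rw [hQ, Measure.map_apply measBin m3, hp3]
  have q4 : Q {x : Conf1 | x 2 = true ∧ x 1 = false}
      = P (S2 ∩ {ω | (ω 4 || ω 5) = true}) := by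
    rw [hQ, Measure.map_apply measBin m4, hp4]
  -- cylinder identifications
  have c1 : ∀ a b u v : Bool, S1 ∩ {ω | (ω 0 = a ∧ ω 1 = b) ∧ ω 4 = u ∧ ω 5 = v}
      = cylSet 0 7 (W a b u v) := by
    intro a b u v
    ext ω
    simp only [Set.mem_inter_iff, Set.mem_setOf_eq, hS1, cylSet,
      (by decide : Finset.Icc (0:ℤ) 7 = {0,1,2,3,4,5,6,7}), Finset.mem_insert,
      Finset.mem_singleton, forall_eq_or_imp, forall_eq, W]
    norm_num
    tauto
  have c2 : ∀ a b u v : Bool, S2 ∩ {ω | (ω 0 = a ∧ ω 1 = b) ∧ ω 4 = u ∧ ω 5 = v}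
      = cylSet 0 5 (W a b u v) := by
    intro a b u v
    ext ω
    simp only [Set.mem_inter_iff, Set.mem_setOf_eq, hS2, cylSet,
      (by decide : Finset.Icc (0:ℤ) 5 = {0,1,2,3,4,5}), Finset.mem_insert,
      Finset.mem_singleton, forall_eq_or_imp, forall_eq, W]
    norm_num
    tauto
  have c3 : ∀ u v : Bool, S1 ∩ {ω | ω 4 = u ∧ ω 5 = v} = cylSet 2 7 (W true true u v) := by
    intro u v
    ext ω
    simp only [Set.mem_inter_iff, Set.mem_setOf_eq, hS1, cylSet,
      (by decide : Finset.Icc (2:ℤ) 7 = {2,3,4,5,6,7}), Finset.mem_insert,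
      Finset.mem_singleton, forall_eq_or_imp, forall_eq, W]
    norm_num
    tauto
  have c4 : ∀ u v : Bool, S2 ∩ {ω | ω 4 = u ∧ ω 5 = v} = cylSet 2 5 (W true true u v) := by
    intro u v
    ext ω
    simp only [Set.mem_inter_iff, Set.mem_setOf_eq, hS2, cylSet,
      (by decide : Finset.Icc (2:ℤ) 5 = {2,3,4,5}), Finset.mem_insert,
      Finset.mem_singleton, forall_eq_or_imp, forall_eq, W]
    norm_num
    tauto
  -- decompositions into cylinders
  have d1 := or_split2 P S1 mS1
  have d2 := or_split2 P S2 mS2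
  have d3 := or_split P S1 mS1 4 5
  have d4 := or_split P S2 mS2 4 5
  simp only [c1, c3] at d1 d3
  simp only [c2, c4] at d2 d4
  -- the key real identity
  have key : (Q {x : Conf1 | x 3 = false ∧ x 2 = true ∧ x 1 = false ∧ x 0 = true}).toReal
        * (Q {x : Conf1 | x 2 = true ∧ x 1 = false}).toReal
      = (Q {x : Conf1 | x 3 = false ∧ x 2 = true ∧ x 1 = false}).toReal
        * (Q {x : Conf1 | x 2 = true ∧ x 1 = false ∧ x 0 = true}).toReal := by
    rw [q1, q2, q3, q4, d1, d2, d3, d4]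
    simp only [ENNReal.toReal_add, ENNReal.add_ne_top, measure_ne_top, and_self,
      not_false_iff, ne_eq]
    simp only [hterm1 P hshift hpos hMarkov, hterm2 P hshift hpos hMarkov,
      hterm3 P hshift hpos hMarkov, hterm4 P hshift hpos hMarkov]
    ring
  -- positivity of the denominators
  have pos2 : 0 < (Q {x : Conf1 | x 2 = true ∧ x 1 = false ∧ x 0 = true}).toReal := by
    refine ENNReal.toReal_pos ?_ (by rw [q2]; exact measure_ne_top _ _)
    rw [q2, d2]
    have h0 : 0 < P (cylSet 0 5 (W true true true true)) :=
      hpos (Finset.Icc 0 5) (W true true true true)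
    exact (lt_of_lt_of_le h0
      (((le_self_add.trans le_self_add).trans le_self_add).trans le_self_add)).ne'
  have pos4 : 0 < (Q {x : Conf1 | x 2 = true ∧ x 1 = false}).toReal := by
    refine ENNReal.toReal_pos ?_ (by rw [q4]; exact measure_ne_top _ _)
    rw [q4, d4]
    have h0 : 0 < P (cylSet 2 5 (W true true true true)) :=
      hpos (Finset.Icc 2 5) (W true true true true)
    exact (lt_of_lt_of_le h0 (le_self_add.trans le_self_add)).ne'
  constructor
  · unfold condProb1
    have i1 : {x : Conf1 | x 3 = false} ∩ {x | x 2 = true ∧ x 1 = false ∧ x 0 = true}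
        = {x : Conf1 | x 3 = false ∧ x 2 = true ∧ x 1 = false ∧ x 0 = true} := rfl
    have i2 : {x : Conf1 | x 3 = false} ∩ {x | x 2 = true ∧ x 1 = false}
        = {x : Conf1 | x 3 = false ∧ x 2 = true ∧ x 1 = false} := rfl
    rw [i1, i2, div_eq_div_iff pos2.ne' pos4.ne']
    exact key
  · have n1 : Q {x : Conf1 | x 3 = false ∧ x 2 = true ∧ x 1 = false ∧ x 0 = true} ≠ ⊤ := by
      rw [q1]; exact measure_ne_top _ _
    have n2 : Q {x : Conf1 | x 2 = true ∧ x 1 = false ∧ x 0 = true} ≠ ⊤ := by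
      rw [q2]; exact measure_ne_top _ _
    have n3 : Q {x : Conf1 | x 3 = false ∧ x 2 = true ∧ x 1 = false} ≠ ⊤ := by
      rw [q3]; exact measure_ne_top _ _
    have n4 : Q {x : Conf1 | x 2 = true ∧ x 1 = false} ≠ ⊤ := by
      rw [q4]; exact measure_ne_top _ _
    refine (ENNReal.toReal_eq_toReal_iff' (ENNReal.mul_ne_top n1 n4) (ENNReal.mul_ne_top n3 n2)).mp ?_
    rw [ENNReal.toReal_mul, ENNReal.toReal_mul]
    exact key
end
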